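/- arXiv:1407.3067 — 8 statements merged into one kernel-verified Lean document; each statement's English description precedes it below -/
import Mathlib

section
/- Let a^{ij}(p) = p^i(δ^i_j − p^j) be the Wright–Fisher diffusion coefficients. Under the blow-up change of coordinates p̃ = Φ^s_r(p), the transformed coefficient ã^{kl} = Σ_{i,j} a^{ij} (∂p̃^k/∂p^i)(∂p̃^l/∂p^j) satisfies ã^{kl}(p̃) = p̃^k(δ^k_l − p̃^l) for all k, l ≠ r. -/
/-- Under the blow-up p̃ = Φ^s_r(p), the transformed Wright–Fisher
coefficients ã^{kl} = Σ_{i,j} a^{ij}(∂p̃^k/∂p^i)(∂p̃^l/∂p^j) satisfy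
ã^{kl}(p̃) = p̃^k(δ^k_l − p̃^l) for all k, l ≠ r. -/
theorem blowup_coeff_simplex_part (d : ℕ) (s r : Fin d) (hsr : s ≠ r)
    (Φ : (Fin d → ℝ) → (Fin d → ℝ))
    (hΦ : ∀ p i, Φ p i =
      if i = s then p s + p r else if i = r then p r / (p s + p r) else p i)
    (a : (Fin d → ℝ) → Fin d → Fin d → ℝ)
    (ha : ∀ p i j, a p i j = p i * ((if i = j then (1:ℝ) else 0) - p j))
    (p : Fin d → ℝ) (hp : 0 < p s + p r)
    (k l : Fin d) (hk : k ≠ r) (hl : l ≠ r) :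
    (∑ i, ∑ j, a p i j *
        fderiv ℝ (fun q => Φ q k) p (Pi.single i 1) *
        fderiv ℝ (fun q => Φ q l) p (Pi.single j 1))
      = Φ p k * ((if k = l then (1:ℝ) else 0) - Φ p l) := by
  have hD : ∀ m : Fin d, m ≠ r → ∀ i : Fin d,
      fderiv ℝ (fun q => Φ q m) p (Pi.single i 1)
        = (if m = s then (if i = s then (1:ℝ) else 0) + (if i = r then 1 else 0)
           else if i = m then 1 else 0) := by
    intro m hm i
    by_cases hms : m = s
    · have hfun : (fun q : Fin d → ℝ => Φ q m) = fun q => q s + q r := by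
        funext q; simp [hΦ, hms]
      have h1 : HasFDerivAt (fun q : Fin d → ℝ => q s + q r)
          ((ContinuousLinearMap.proj s : (Fin d → ℝ) →L[ℝ] ℝ)
            + ContinuousLinearMap.proj r) p :=
        ((ContinuousLinearMap.proj s : (Fin d → ℝ) →L[ℝ] ℝ).hasFDerivAt.add
          (ContinuousLinearMap.proj r : (Fin d → ℝ) →L[ℝ] ℝ).hasFDerivAt)
      rw [hfun, h1.fderiv]
      simp [Pi.single_apply, hms, eq_comm]
    · have hfun : (fun q : Fin d → ℝ => Φ q m) = fun q => q m := by
        funext q; simp [hΦ, hms, hm]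
      have h1 : HasFDerivAt (fun q : Fin d → ℝ => q m)
          (ContinuousLinearMap.proj m : (Fin d → ℝ) →L[ℝ] ℝ) p :=
        (ContinuousLinearMap.proj m : (Fin d → ℝ) →L[ℝ] ℝ).hasFDerivAt
      rw [hfun, h1.fderiv]
      simp [Pi.single_apply, hms, eq_comm]
  simp only [hD k hk, hD l hl, ha]
  set f : Fin d → ℝ := fun i =>
    (if k = s then (if i = s then (1:ℝ) else 0) + (if i = r then 1 else 0)
     else if i = k then 1 else 0) with hf
  set g : Fin d → ℝ := fun i =>
    (if l = s then (if i = s then (1:ℝ) else 0) + (if i = r then 1 else 0)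
     else if i = l then 1 else 0) with hg
  have inner : ∀ i : Fin d, (∑ j, (p i * ((if i = j then (1:ℝ) else 0) - p j)) * f i * g j)
      = p i * f i * g i - (p i * f i) * ∑ j, p j * g j := by
    intro i
    have e : ∀ j : Fin d, (p i * ((if i = j then (1:ℝ) else 0) - p j)) * f i * g j
        = (if i = j then p i * f i * g j else 0) - (p i * f i) * (p j * g j) := by
      intro j; by_cases h : i = j <;> simp [h] <;> ring
    simp only [e, Finset.sum_sub_distrib, Finset.sum_ite_eq, Finset.mem_univ, if_true,
      ← Finset.mul_sum]
  have key : (∑ i, ∑ j, (p i * ((if i = j then (1:ℝ) else 0) - p j)) * f i * g j)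
      = (∑ i, p i * f i * g i) - (∑ i, p i * f i) * (∑ j, p j * g j) := by
    simp only [inner, Finset.sum_sub_distrib, ← Finset.sum_mul]
  rw [key]
  have hpf : (∑ i, p i * f i) = Φ p k := by
    by_cases hks : k = s <;>
      simp [hf, hks, hΦ, hk, mul_ite, mul_add, mul_one, mul_zero,
        Finset.sum_add_distrib, Finset.sum_ite_eq']
  have hpg : (∑ i, p i * g i) = Φ p l := by
    by_cases hls : l = s <;>
      simp [hg, hls, hΦ, hl, mul_ite, mul_add, mul_one, mul_zero,
        Finset.sum_add_distrib, Finset.sum_ite_eq']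
  have hval : ∀ (m : Fin d), m ≠ r → ∀ i : Fin d,
      (if m = s then (if i = s then (1:ℝ) else 0) + (if i = r then 1 else 0)
       else if i = m then 1 else 0) = if (i = m ∨ (m = s ∧ i = r)) then 1 else 0 := by
    intro m hm i
    by_cases hms : m = s
    · rw [if_pos hms, hms]
      by_cases his : i = s <;> by_cases hir : i = r
      · exact absurd (his.symm.trans hir) hsr
      all_goals simp [his, hir, hsr, Ne.symm hsr]
    · simp [hms]
  have hfval : ∀ i, f i = if (i = k ∨ (k = s ∧ i = r)) then 1 else 0 := fun i =>
    (congrFun hf i).trans (hval k hk i)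
  have hgval : ∀ i, g i = if (i = l ∨ (l = s ∧ i = r)) then 1 else 0 := fun i =>
    (congrFun hg i).trans (hval l hl i)
  have hfg : ∀ i, f i * g i = if k = l then f i else 0 := by
    intro i
    by_cases hkl : k = l
    · subst hkl
      rw [if_pos rfl, hfval i, hgval i]
      split_ifs <;> simp
    · rw [if_neg hkl, hfval i, hgval i]
      by_cases h1 : (i = k ∨ (k = s ∧ i = r))
      · have h2 : ¬(i = l ∨ (l = s ∧ i = r)) := by
          rintro (h2 | ⟨hls, hir⟩)
          · rcases h1 with h1 | ⟨hks, hir⟩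
            · exact hkl (h1.symm.trans h2)
            · exact hl (h2.symm.trans hir)
          · rcases h1 with h1 | ⟨hks, hir'⟩
            · exact hk (h1.symm.trans hir)
            · exact hkl (hks.trans hls.symm)
        simp [h1, h2]
      · simp [h1]
  have hdiag : (∑ i, p i * f i * g i) = (if k = l then (1:ℝ) else 0) * Φ p k := by
    have e : ∀ i : Fin d, p i * f i * g i = (if k = l then (1:ℝ) else 0) * (p i * f i) := by
      intro i
      rw [mul_assoc, hfg i]
      by_cases hkl : k = l <;> simp [hkl] <;> ring
    simp only [e, ← Finset.mul_sum, hpf]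
  rw [hpf, hpg, hdiag]
  ring
end

section
/- Under the blow-up change of coordinates p̃ = Φ^s_r(p), the transformed coefficient ã^{rr}(p̃) = Σ_{i,j} a^{ij}(p)(∂p̃^r/∂p^i)(∂p̃^r/∂p^j) equals p̃^r(1−p̃^r)/p̃^s, where a^{ij}(p) = p^i(δ^i_j − p^j). -/
/-!
With `T = p s + p r`, the blow-up coordinate `p̃ r = p r / T` has gradient
`c = (p s • e r - p r • e s) / T²`, and the quadratic form of `a(p) = diag p - p pᵀ` is
`∑ p i c i² - (∑ p i c i)²`. The second sum is the derivative of `p̃ r` in the radial direction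
`p`, which vanishes because `p̃ r` is homogeneous of degree `0`; the first is
`(p s p r² + p r p s²) / T⁴ = p s p r / T³ = p̃ r (1 - p̃ r) / p̃ s`.
-/

open Finset

section
variable {ι : Type*} [Fintype ι]

theorem sum_sum_mul_kronecker_sub_mul {R : Type*} [CommRing R] [DecidableEq ι] (p c : ι → R) :
    ∑ i, ∑ j, p i * ((if i = j then (1 : R) else 0) - p j) * c i * c j
      = ∑ i, p i * c i ^ 2 - (∑ i, p i * c i) ^ 2 := by
  simp only [mul_sub, sub_mul, sum_sub_distrib, mul_ite, mul_one, mul_zero, ite_mul, zero_mul,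
    sum_ite_eq, mem_univ, if_true, sq, sum_mul, mul_sum]
  congr 1
  · exact sum_congr rfl fun i _ => by ring
  · exact sum_congr rfl fun i _ => sum_congr rfl fun j _ => by ring

theorem sum_mul_apply_single {R : Type*} [CommSemiring R] [TopologicalSpace R] [DecidableEq ι]
    (L : (ι → R) →L[R] R) (p : ι → R) :
    ∑ i, p i * L (Pi.single i 1) = L p := by
  conv_rhs => rw [pi_eq_sum_univ' p, map_sum]
  simp only [map_smul, smul_eq_mul]

variable {𝕜 : Type*} [NontriviallyNormedField 𝕜]

theorem fderiv_apply_div_apply_add {s r : ι} {p : ι → 𝕜} (hp : p s + p r ≠ 0) (v : ι → 𝕜) :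
    fderiv 𝕜 (fun q : ι → 𝕜 => q r / (q s + q r)) p v
      = (p s * v r - p r * v s) / (p s + p r) ^ 2 := by
  have hsum := (hasFDerivAt_apply (𝕜 := 𝕜) s p).add (hasFDerivAt_apply r p)
  have hquot : HasFDerivAt (fun q : ι → 𝕜 => q r * (q s + q r)⁻¹) _ p :=
    (hasFDerivAt_apply r p).mul ((hasDerivAt_inv hp).comp_hasFDerivAt p hsum)
  simp only [div_eq_mul_inv, hquot.fderiv, smul_add, neg_smul, smul_neg, add_apply, neg_apply,
    smul_apply, ContinuousLinearMap.proj_apply, smul_eq_mul]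
  field_simp
  ring

/-- Euler's identity for the degree-`0` homogeneous function `q r / (q s + q r)`. -/
theorem fderiv_apply_div_apply_add_self {s r : ι} {p : ι → 𝕜} (hp : p s + p r ≠ 0) :
    fderiv 𝕜 (fun q : ι → 𝕜 => q r / (q s + q r)) p p = 0 := by
  rw [fderiv_apply_div_apply_add hp]
  ring

theorem sum_mul_fderiv_apply_div_apply_add_single_sq [DecidableEq ι] {s r : ι} (hsr : s ≠ r)
    {p : ι → 𝕜} (hp : p s + p r ≠ 0) :
    ∑ i, p i * fderiv 𝕜 (fun q : ι → 𝕜 => q r / (q s + q r)) p (Pi.single i 1) ^ 2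
      = p s * p r / (p s + p r) ^ 3 := by
  simp only [fderiv_apply_div_apply_add hp]
  rw [Fintype.sum_eq_add s r hsr fun i hi => by simp [hi.1, hi.2]]
  simp only [Pi.single_apply, if_pos, hsr, hsr.symm, if_false]
  field_simp
  ring

end

/-- Under the blow-up p̃ = Φ^s_r(p), the transformed coefficient
ã^{rr}(p̃) = Σ_{i,j} a^{ij}(p)(∂p̃^r/∂p^i)(∂p̃^r/∂p^j) equals p̃^r(1−p̃^r)/p̃^s. -/
theorem blowup_coeff_rr (d : ℕ) (s r : Fin d) (hsr : s ≠ r)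
    (Φ : (Fin d → ℝ) → (Fin d → ℝ))
    (hΦ : ∀ p i, Φ p i =
      if i = s then p s + p r else if i = r then p r / (p s + p r) else p i)
    (a : (Fin d → ℝ) → Fin d → Fin d → ℝ)
    (ha : ∀ p i j, a p i j = p i * ((if i = j then (1:ℝ) else 0) - p j))
    (p : Fin d → ℝ) (hp : 0 < p s + p r) :
    (∑ i, ∑ j, a p i j *
        fderiv ℝ (fun q => Φ q r) p (Pi.single i 1) *
        fderiv ℝ (fun q => Φ q r) p (Pi.single j 1))
      = Φ p r * (1 - Φ p r) / Φ p s := by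
  have hΦr : (fun q => Φ q r) = fun q => q r / (q s + q r) := by
    funext q
    rw [hΦ, if_neg hsr.symm, if_pos rfl]
  have hΦs : Φ p s = p s + p r := by rw [hΦ, if_pos rfl]
  simp only [ha, sum_sum_mul_kronecker_sub_mul, hΦr, hΦs, congrFun hΦr p]
  rw [sum_mul_apply_single, fderiv_apply_div_apply_add_self hp.ne',
    sum_mul_fderiv_apply_div_apply_add_single_sq hsr hp.ne']
  field_simp
  ring
end

section
/- Under the blow-up change of coordinates p̃ = Φ^s_r(p), all mixed transformed coefficients involving the index r vanish: ã^{rl}(p̃) = ã^{lr}(p̃) = 0 for every l ≠ r, where ã^{kl} = Σ_{i,j} a^{ij}(∂p̃^k/∂p^i)(∂p̃^l/∂p^j) and a^{ij}(p) = p^i(δ^i_j − p^j). -/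
/-!
Write `S = p^s + p^r`. The gradient of `p̃^r = p^r / S` is `(p^s e_r - p^r e_s) / S²`; it is
orthogonal to `p` because `p̃^r` is homogeneous of degree `0`. Since `a = diag p - p pᵀ`, the
mixed coefficient therefore reduces to `∑ i, p^i ∂_i p̃^r ∂_i p̃^l = p^s p^r (∂_r p̃^l - ∂_s p̃^l) / S²`,
which vanishes because for `l ≠ r` the coordinate `p̃^l` is constant along `e_r - e_s`.
-/

open Finset

section

variable {ι : Type*} [Fintype ι]

theorem sum_sum_covariance_mul [DecidableEq ι] (p v w : ι → ℝ) :
    ∑ i, ∑ j, p i * ((if i = j then 1 else 0) - p j) * v i * w j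
      = ∑ i, p i * v i * w i - (∑ i, p i * v i) * ∑ j, p j * w j := by
  simp only [mul_sub, sub_mul, sum_sub_distrib, mul_ite, ite_mul, mul_one, mul_zero, zero_mul,
    sum_ite_eq, mem_univ, if_true, sum_mul_sum]
  congr 1; exact sum_congr rfl fun i _ => sum_congr rfl fun j _ => by ring

theorem fderiv_div_add_apply (s r : ι) {p : ι → ℝ} (hp : p s + p r ≠ 0) (x : ι → ℝ) :
    fderiv ℝ (fun q : ι → ℝ => q r / (q s + q r)) p x =
      (p s * x r - p r * x s) / (p s + p r) ^ 2 := by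
  have hS := (hasFDerivAt_apply (𝕜 := ℝ) s p).add (hasFDerivAt_apply r p)
  have h : HasFDerivAt (fun q : ι → ℝ => q r * (q s + q r)⁻¹) _ p :=
    (hasFDerivAt_apply r p).mul ((hasFDerivAt_inv hp).comp p hS)
  simp only [div_eq_mul_inv]
  rw [h.fderiv]
  simp only [ContinuousLinearMap.comp_add, add_apply, smul_apply, ContinuousLinearMap.comp_apply,
    ContinuousLinearMap.proj_apply, ContinuousLinearMap.toSpanSingleton_apply, smul_add,
    smul_eq_mul, mul_neg]
  field_simp
  ring

theorem sum_mul_fderiv_div_add_apply_single_mul [DecidableEq ι] (s r : ι) {p : ι → ℝ}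
    (hp : p s + p r ≠ 0) (w : ι → ℝ) :
    ∑ i, p i * fderiv ℝ (fun q : ι → ℝ => q r / (q s + q r)) p (Pi.single i 1) * w i
      = p s * p r * (w r - w s) / (p s + p r) ^ 2 := by
  simp only [fderiv_div_add_apply s r hp, Pi.single_apply, mul_ite, mul_one, mul_zero, sub_div,
    ite_div, zero_div, mul_sub, sub_mul, ite_mul, zero_mul, sum_sub_distrib, sum_ite_eq, mem_univ,
    if_true]
  ring

end

theorem fderiv_apply_eq_zero_of_forall_add_smul_eq {E F : Type*} [NormedAddCommGroup E]
    [NormedSpace ℝ E] [NormedAddCommGroup F] [NormedSpace ℝ F] {f : E → F} {x v : E}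
    (h : ∀ t : ℝ, f (x + t • v) = f x) : fderiv ℝ f x v = 0 := by
  by_cases hf : DifferentiableAt ℝ f x
  · rw [← hf.lineDeriv_eq_fderiv, lineDeriv]
    simp [h]
  · simp [fderiv_zero_of_not_differentiableAt hf]

/-- Under the blow-up p̃ = Φ^s_r(p), all mixed transformed coefficients
involving the index r vanish: ã^{rl}(p̃) = ã^{lr}(p̃) = 0 for every l ≠ r. -/
theorem blowup_coeff_mixed_vanish (d : ℕ) (s r : Fin d) (hsr : s ≠ r)
    (Φ : (Fin d → ℝ) → (Fin d → ℝ))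
    (hΦ : ∀ p i, Φ p i =
      if i = s then p s + p r else if i = r then p r / (p s + p r) else p i)
    (a : (Fin d → ℝ) → Fin d → Fin d → ℝ)
    (ha : ∀ p i j, a p i j = p i * ((if i = j then (1:ℝ) else 0) - p j))
    (p : Fin d → ℝ) (hp : 0 < p s + p r)
    (l : Fin d) (hl : l ≠ r) :
    (∑ i, ∑ j, a p i j *
        fderiv ℝ (fun q => Φ q r) p (Pi.single i 1) *
        fderiv ℝ (fun q => Φ q l) p (Pi.single j 1)) = 0 ∧
    (∑ i, ∑ j, a p i j *
        fderiv ℝ (fun q => Φ q l) p (Pi.single i 1) *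
        fderiv ℝ (fun q => Φ q r) p (Pi.single j 1)) = 0 := by
  have hS : p s + p r ≠ 0 := hp.ne'
  have hΦr : (fun q => Φ q r) = fun q => q r / (q s + q r) :=
    funext fun q => by simp [hΦ, hsr.symm]
  have hΦl : fderiv ℝ (fun q => Φ q l) p (Pi.single r 1) =
      fderiv ℝ (fun q => Φ q l) p (Pi.single s 1) := by
    rw [← sub_eq_zero, ← map_sub]
    refine fderiv_apply_eq_zero_of_forall_add_smul_eq fun t => ?_
    by_cases hls : l = s
    · subst hls; simp [hΦ, hsr, hsr.symm]; ring
    · simp [hΦ, hls, hl]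
  have hpv : ∑ i, p i * fderiv ℝ (fun q => Φ q r) p (Pi.single i 1) = 0 := by
    simpa [hΦr] using sum_mul_fderiv_div_add_apply_single_mul s r hS 1
  have hpvw : ∑ i, p i * fderiv ℝ (fun q => Φ q r) p (Pi.single i 1) *
      fderiv ℝ (fun q => Φ q l) p (Pi.single i 1) = 0 := by
    rw [hΦr, sum_mul_fderiv_div_add_apply_single_mul s r hS, hΦl, sub_self, mul_zero, zero_div]
  simp only [ha, sum_sum_covariance_mul, hpv, zero_mul, mul_zero, sub_zero]
  exact ⟨hpvw, by simpa only [mul_right_comm] using hpvw⟩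
end

section
/- Under the blow-up change of coordinates p̃ = Φ^s_r(p), no first-order terms are generated: Σ_{i,j} a^{ij}(p) ∂²p̃^r/∂p^i∂p^j = 0, where a^{ij}(p) = p^i(δ^i_j − p^j) with a^{ss} = p^s(1−p^s), a^{rr} = p^r(1−p^r), a^{sr} = a^{rs} = −p^s p^r. -/
/-! `p̃^r = φ / ψ` with `φ = p^r` and `ψ = p^s + p^r` linear, so `D²p̃^r(q)(u, v)` is an explicit
expression in `φ` and `ψ` evaluated at `q`, `u`, `v`, which vanishes when `u` or `v` has zero `s`- and
`r`-components. The sum thus reduces to `i, j ∈ {s, r}`, where its two parts cancel separately: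
`∑ p^i p^j ∂ᵢ∂ⱼp̃^r = D²p̃^r(p)(p, p) = 0` since `p̃^r` is homogeneous of degree `0`, and
`p^s ∂ₛ²p̃^r + p^r ∂ᵣ²p̃^r = (2 p^s p^r - 2 p^r p^s) / (p^s + p^r)³ = 0`. -/

open ContinuousLinearMap

variable {𝕜 E : Type*} [NontriviallyNormedField 𝕜] [NormedAddCommGroup E] [NormedSpace 𝕜 E]

theorem HasFDerivAt.div {c d : E → 𝕜} {c' d' : E →L[𝕜] 𝕜} {x : E}
    (hc : HasFDerivAt c c' x) (hd : HasFDerivAt d d' x) (hx : d x ≠ 0) :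
    HasFDerivAt (fun y => c y / d y) ((d x ^ 2)⁻¹ • (d x • c' - c x • d')) x := by
  simp only [div_eq_mul_inv]
  refine (hc.fun_mul ((hasDerivAt_inv hx).comp_hasFDerivAt x hd)).congr_fderiv ?_
  ext v
  simp
  field_simp
  ring

namespace ContinuousLinearMap

variable (φ ψ : E →L[𝕜] 𝕜)

theorem fderiv_div_apply {x : E} (hx : ψ x ≠ 0) (v : E) :
    fderiv 𝕜 (fun w => φ w / ψ w) x v = (ψ x * φ v - φ x * ψ v) / ψ x ^ 2 := by
  rw [(φ.hasFDerivAt.div ψ.hasFDerivAt hx).fderiv]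
  simp
  ring

theorem fderiv_fderiv_div_apply {q : E} (hq : ψ q ≠ 0) (u v : E) :
    fderiv 𝕜 (fun x => fderiv 𝕜 (fun w => φ w / ψ w) x v) q u =
      ((ψ u * φ v - φ u * ψ v) * ψ q - 2 * (ψ q * φ v - φ q * ψ v) * ψ u) / ψ q ^ 3 := by
  have hloc : (fun x => fderiv 𝕜 (fun w => φ w / ψ w) x v) =ᶠ[nhds q]
      fun x => (ψ x * φ v - φ x * ψ v) / ψ x ^ 2 := by
    filter_upwards [ψ.continuous.continuousAt.eventually_ne hq] with x hx
    exact φ.fderiv_div_apply ψ hx v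
  have hnum : HasFDerivAt (fun x => ψ x * φ v - φ x * ψ v) (φ v • ψ - ψ v • φ) q :=
    (ψ.hasFDerivAt.mul_const (φ v)).fun_sub (φ.hasFDerivAt.mul_const (ψ v))
  rw [hloc.fderiv_eq, (hnum.div (ψ.hasFDerivAt.pow 2) (pow_ne_zero 2 hq)).fderiv]
  simp
  field_simp

end ContinuousLinearMap

theorem fderiv_fderiv_coord_div_apply {ι : Type*} [Fintype ι] (s r : ι) {p : ι → 𝕜}
    (hp : p s + p r ≠ 0) (u v : ι → 𝕜) :
    fderiv 𝕜 (fun q => fderiv 𝕜 (fun w : ι → 𝕜 => w r / (w s + w r)) q v) p u =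
      (((u s + u r) * v r - u r * (v s + v r)) * (p s + p r)
        - 2 * ((p s + p r) * v r - p r * (v s + v r)) * (u s + u r)) / (p s + p r) ^ 3 :=
  let π (i : ι) : (ι → 𝕜) →L[𝕜] 𝕜 := proj i
  (π r).fderiv_fderiv_div_apply (π s + π r) hp u v

/-- No first-order terms are generated by the blow-up:
Σ_{i,j} a^{ij}(p) ∂²p̃^r/∂p^i∂p^j = 0, where a^{ij}(p) = p^i(δ^i_j − p^j) and
p̃^r = p^r/(p^s + p^r). -/
theorem blowup_no_first_order (d : ℕ) (s r : Fin d) (hsr : s ≠ r)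
    (a : (Fin d → ℝ) → Fin d → Fin d → ℝ)
    (ha : ∀ p i j, a p i j = p i * ((if i = j then (1:ℝ) else 0) - p j))
    (p : Fin d → ℝ) (hp : 0 < p s + p r) :
    (∑ i, ∑ j, a p i j *
      fderiv ℝ (fun q : Fin d → ℝ =>
        fderiv ℝ (fun w : Fin d → ℝ => w r / (w s + w r)) q (Pi.single j 1))
        p (Pi.single i 1)) = 0 := by
  simp only [ha, fderiv_fderiv_coord_div_apply s r hp.ne', Pi.single_apply]
  rw [Fintype.sum_eq_add s r hsr, Fintype.sum_eq_add s r hsr, Fintype.sum_eq_add s r hsr]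
  · simp only [if_pos, if_neg hsr, if_neg hsr.symm]
    field_simp
    ring
  all_goals
    rintro x ⟨hxs, hxr⟩
    simp [hxs.symm, hxr.symm, hsr, hsr.symm]
end

section
/- The function ū(p,t) := u(π(p), t) · p^s/(p^s + p^r), where π(p) replaces the coordinates (p^s, p^r) by (p^s + p^r, 0), satisfies the Wright–Fisher backward equation −∂ū/∂t = (1/2)Σ_{i,j=1}^n p^i(δ^i_j − p^j) ∂²ū/∂p^i∂p^j on the open simplex Δ_n × (−∞,0), whenever u satisfies the corresponding backward equation on the (n−1)-dimensional face {p^r = 0}. -/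
open scoped Classical

/-- Partial derivative in the i-th coordinate direction. -/
noncomputable def pd {n : ℕ} (i : Fin n) (f : (Fin n → ℝ) → ℝ) : (Fin n → ℝ) → ℝ :=
  fun p => fderiv ℝ f p (Pi.single i 1)

open ContinuousLinearMap in
noncomputable def Lmap (n : ℕ) (s r : Fin n) : (Fin n → ℝ) →L[ℝ] (Fin n → ℝ) :=
  ContinuousLinearMap.pi (fun i => if i = s then
      ((proj s : (Fin n → ℝ) →L[ℝ] ℝ) + proj r)
    else if i = r then (0 : (Fin n → ℝ) →L[ℝ] ℝ) else proj i)

lemma Lmap_apply {n : ℕ} (s r : Fin n) (x : Fin n → ℝ) (i : Fin n) :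
    Lmap n s r x i = if i = s then x s + x r else if i = r then 0 else x i := by
  simp only [Lmap, ContinuousLinearMap.pi_apply]
  split_ifs <;> simp

lemma Lmap_single {n : ℕ} {s r : Fin n} (hsr : s ≠ r) (j : Fin n) :
    Lmap n s r (Pi.single j 1) = Pi.single (if j = r then s else j) 1 := by
  funext i
  rw [Lmap_apply]
  rcases eq_or_ne j r with rfl | hjr
  · rcases eq_or_ne i s with rfl | his
    · simp [Pi.single_apply, hsr, Ne.symm hsr]
    · rcases eq_or_ne i j with rfl | hij
      · simp [Pi.single_apply, his, Ne.symm his]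
      · simp [Pi.single_apply, his, hij, Ne.symm hsr]
  · rcases eq_or_ne i s with rfl | his
    · simp [Pi.single_apply, hjr, Ne.symm hjr, hsr]
    · rcases eq_or_ne i r with rfl | hir
      · simp [Pi.single_apply, his, hjr, Ne.symm hjr]
      · simp [Pi.single_apply, his, hir, hjr]

lemma two_point {n : ℕ} {s r : Fin n} (hsr : s ≠ r) (F : Fin n → ℝ)
    (h : ∀ i, i ≠ s → i ≠ r → F i = 0) : ∑ i, F i = F s + F r := by
  have h1 : ∑ i, F i = ∑ i ∈ ({s, r} : Finset (Fin n)), F i := by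
    refine (Finset.sum_subset (Finset.subset_univ _) ?_).symm
    intro x _ hx
    simp only [Finset.mem_insert, Finset.mem_singleton, not_or] at hx
    exact h x hx.1 hx.2
  rw [h1, Finset.sum_pair hsr]

lemma sum_split {n : ℕ} {s r : Fin n} (hsr : s ≠ r) (F : Fin n → ℝ) :
    ∑ i, F i = F s + F r + ∑ i ∈ (Finset.univ.erase s).erase r, F i := by
  have hr : r ∈ Finset.univ.erase s := Finset.mem_erase.2 ⟨Ne.symm hsr, Finset.mem_univ r⟩
  rw [← Finset.add_sum_erase _ F (Finset.mem_univ s), ← Finset.add_sum_erase _ F hr, ← add_assoc]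

open ContinuousLinearMap in
lemma phi_hasFDeriv {n : ℕ} (s r : Fin n) (x : Fin n → ℝ) (hx : x s + x r ≠ 0) :
    HasFDerivAt (fun y : Fin n → ℝ => y s * (y s + y r)⁻¹)
      (x s • ((smulRight (1 : ℝ →L[ℝ] ℝ) (-((x s + x r) ^ 2)⁻¹)).comp
          ((proj s : (Fin n → ℝ) →L[ℝ] ℝ) + proj r))
        + (x s + x r)⁻¹ • (proj s : (Fin n → ℝ) →L[ℝ] ℝ)) x := by
  have hs : HasFDerivAt (fun y : Fin n → ℝ => y s) (proj s : (Fin n → ℝ) →L[ℝ] ℝ) x :=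
    (proj s : (Fin n → ℝ) →L[ℝ] ℝ).hasFDerivAt
  have hr : HasFDerivAt (fun y : Fin n → ℝ => y r) (proj r : (Fin n → ℝ) →L[ℝ] ℝ) x :=
    (proj r : (Fin n → ℝ) →L[ℝ] ℝ).hasFDerivAt
  have hsum : HasFDerivAt (fun y : Fin n → ℝ => y s + y r)
      ((proj s : (Fin n → ℝ) →L[ℝ] ℝ) + proj r) x := hs.add hr
  have hinv : HasFDerivAt (fun y : Fin n → ℝ => (y s + y r)⁻¹)
      ((smulRight (1 : ℝ →L[ℝ] ℝ) (-((x s + x r) ^ 2)⁻¹)).comp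
        ((proj s : (Fin n → ℝ) →L[ℝ] ℝ) + proj r)) x :=
    (hasFDerivAt_inv hx).comp x hsum
  exact hs.mul hinv

lemma phi_deriv_apply {n : ℕ} {s r : Fin n} (hsr : s ≠ r) (x : Fin n → ℝ) (hx : x s + x r ≠ 0)
    (i : Fin n) :
    (x s • ((ContinuousLinearMap.smulRight (1 : ℝ →L[ℝ] ℝ) (-((x s + x r) ^ 2)⁻¹)).comp
          ((ContinuousLinearMap.proj s : (Fin n → ℝ) →L[ℝ] ℝ) + ContinuousLinearMap.proj r))
        + (x s + x r)⁻¹ • (ContinuousLinearMap.proj s : (Fin n → ℝ) →L[ℝ] ℝ)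
        : (Fin n → ℝ) →L[ℝ] ℝ) (Pi.single i 1)
      = if i = s then x r / (x s + x r) ^ 2 else if i = r then -(x s) / (x s + x r) ^ 2 else 0 := by
  simp only [ContinuousLinearMap.add_apply, ContinuousLinearMap.smul_apply,
    ContinuousLinearMap.comp_apply, ContinuousLinearMap.smulRight_apply,
    ContinuousLinearMap.one_apply, ContinuousLinearMap.proj_apply, Pi.single_apply,
    smul_eq_mul]
  rcases eq_or_ne i s with rfl | his
  · simp [hsr, if_neg (Ne.symm hsr)]
    field_simp
    ring
  · rcases eq_or_ne i r with rfl | hir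
    · simp [Ne.symm his, his]
      field_simp
    · simp [Ne.symm his, Ne.symm hir, his, hir]

set_option maxHeartbeats 2000000 in
/-- If u is a smooth solution of the Wright–Fisher backward equation
on the face {p^r = 0}, then ū(p,t) = u(π(p),t)·p^s/(p^s+p^r) (where π replaces
(p^s,p^r) by (p^s+p^r,0)) solves the backward equation on Δ_n × (−∞,0). -/
theorem extension_solves_backward (n : ℕ) (s r : Fin n) (hsr : s ≠ r)
    (u : (Fin n → ℝ) → ℝ → ℝ)
    (E : (Fin n → ℝ) → (Fin n → ℝ))
    (hE : ∀ p i, E p i = if i = r then 0 else p i)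
    (π : (Fin n → ℝ) → (Fin n → ℝ))
    (hπ : ∀ p i, π p i = if i = s then p s + p r else if i = r then 0 else p i)
    (v : (Fin n → ℝ) → ℝ → ℝ) (hv : ∀ p t, v p t = u (E p) t)
    (hsmooth : ContDiff ℝ (⊤ : ℕ∞) (fun x : (Fin n → ℝ) × ℝ => v x.1 x.2))
    (heq : ∀ p : Fin n → ℝ, p r = 0 → (∀ i, i ≠ r → 0 < p i) → (∑ i, p i) < 1 →
      ∀ t : ℝ, t < 0 →
      -(deriv (fun τ => v p τ) t) =
        (1/2) * ∑ i, ∑ j, p i * ((if i = j then (1:ℝ) else 0) - p j) *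
          pd i (pd j (fun q => v q t)) p)
    (ub : (Fin n → ℝ) → ℝ → ℝ)
    (hub : ∀ p t, ub p t = v (π p) t * (p s / (p s + p r))) :
    ∀ p : Fin n → ℝ, (∀ i, 0 < p i) → (∑ i, p i) < 1 → ∀ t : ℝ, t < 0 →
      -(deriv (fun τ => ub p τ) t) =
        (1/2) * ∑ i, ∑ j, p i * ((if i = j then (1:ℝ) else 0) - p j) *
          pd i (pd j (fun q => ub q t)) p := by
  intro p hp hpsum t ht
  have hS0 : 0 < p s + p r := add_pos (hp s) (hp r)
  have hS : p s + p r ≠ 0 := hS0.ne'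
  obtain ⟨gfun, hgfun⟩ : ∃ g : (Fin n → ℝ) → ℝ, g = fun x => v x t := ⟨_, rfl⟩
  obtain ⟨q, hqdef⟩ : ∃ q, q = π p := ⟨_, rfl⟩
  obtain ⟨σ, hσ⟩ : ∃ σ : Fin n → Fin n, σ = fun j => if j = r then s else j := ⟨_, rfl⟩
  obtain ⟨d, hd⟩ : ∃ d : Fin n → ℝ, d = fun i =>
      if i = s then p r / (p s + p r) ^ 2 else if i = r then -(p s) / (p s + p r) ^ 2 else 0 :=
    ⟨_, rfl⟩
  obtain ⟨DD, hDD⟩ : ∃ DD : Fin n → Fin n → ℝ, DD = fun i j =>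
      if j = s then (if i = s then -2 * p r / (p s + p r) ^ 3
        else if i = r then (p s - p r) / (p s + p r) ^ 3 else 0)
      else if j = r then (if i = s then (p s - p r) / (p s + p r) ^ 3
        else if i = r then 2 * p s / (p s + p r) ^ 3 else 0)
      else 0 := ⟨_, rfl⟩
  obtain ⟨dphi, hdphi⟩ : ∃ dphi : Fin n → (Fin n → ℝ) → ℝ, dphi = fun j x =>
      if j = s then x r / (x s + x r) ^ 2 else if j = r then -(x s) / (x s + x r) ^ 2 else 0 :=
    ⟨_, rfl⟩
  obtain ⟨Ub, hUbdef⟩ : ∃ Ub : (Fin n → ℝ) → ℝ,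
      Ub = fun x => gfun (Lmap n s r x) * (x s * (x s + x r)⁻¹) := ⟨_, rfl⟩
  -- basic facts
  have hL : ∀ x, Lmap n s r x = π x := by
    intro x; funext i; rw [Lmap_apply, hπ]
  have hLp : Lmap n s r p = q := by rw [hL, hqdef]
  have hqs : q s = p s + p r := by rw [hqdef, hπ]; simp
  have hqr : q r = 0 := by rw [hqdef, hπ]; simp [Ne.symm hsr]
  have hqother : ∀ i, i ≠ s → i ≠ r → q i = p i := by
    intro i h1 h2; rw [hqdef, hπ]; simp [h1, h2]
  have hg : ContDiff ℝ (⊤ : ℕ∞) gfun := by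
    rw [hgfun]; exact hsmooth.comp (ContDiff.prodMk contDiff_id contDiff_const)
  have hgd : Differentiable ℝ gfun := hg.differentiable (by simp)
  have hpdg : ∀ k : Fin n, ContDiff ℝ (⊤ : ℕ∞) (pd k gfun) := by
    intro k
    have h1 : ContDiff ℝ (⊤ : ℕ∞) (fderiv ℝ gfun) := hg.fderiv_right (by simp)
    exact h1.clm_apply contDiff_const
  have hubt : (fun x => ub x t) = Ub := by
    funext x
    simp only [hub, hUbdef, hL, hgfun, div_eq_mul_inv]
  -- first derivative of Ub on {x s + x r ≠ 0}
  have hfirst : ∀ x, x s + x r ≠ 0 → ∀ j, pd j Ub x =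
      gfun (Lmap n s r x) * dphi j x
        + (x s * (x s + x r)⁻¹) * pd (σ j) gfun (Lmap n s r x) := by
    intro x hx j
    have hgL : HasFDerivAt (fun y => gfun (Lmap n s r y))
        ((fderiv ℝ gfun (Lmap n s r x)).comp (Lmap n s r)) x :=
      (hgd (Lmap n s r x)).hasFDerivAt.comp x (Lmap n s r).hasFDerivAt
    have hUbd : HasFDerivAt Ub
        (gfun (Lmap n s r x) • (x s • ((ContinuousLinearMap.smulRight (1 : ℝ →L[ℝ] ℝ)
            (-((x s + x r) ^ 2)⁻¹)).comp
            ((ContinuousLinearMap.proj s : (Fin n → ℝ) →L[ℝ] ℝ) + ContinuousLinearMap.proj r))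
          + (x s + x r)⁻¹ • (ContinuousLinearMap.proj s : (Fin n → ℝ) →L[ℝ] ℝ))
          + (x s * (x s + x r)⁻¹) • ((fderiv ℝ gfun (Lmap n s r x)).comp (Lmap n s r))) x := by
      rw [hUbdef]
      exact hgL.mul (phi_hasFDeriv s r x hx)
    show fderiv ℝ Ub x (Pi.single j 1) = _
    rw [hUbd.fderiv]
    rw [ContinuousLinearMap.add_apply, ContinuousLinearMap.smul_apply,
      ContinuousLinearMap.smul_apply, ContinuousLinearMap.comp_apply, Lmap_single hsr,
      phi_deriv_apply hsr x hx]
    simp only [hdphi, hσ, smul_eq_mul]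
    rfl
  -- second derivatives at p
  have hsecond : ∀ i j, pd i (pd j Ub) p =
      (p s / (p s + p r)) * pd (σ i) (pd (σ j) gfun) q
        + pd (σ j) gfun q * d i + pd (σ i) gfun q * d j + gfun q * DD i j := by
    intro i j
    have hU : IsOpen ((fun x : Fin n → ℝ => x s + x r) ⁻¹' {(0:ℝ)}ᶜ) :=
      isOpen_compl_singleton.preimage ((continuous_apply s).add (continuous_apply r))
    have hmem : ((fun x : Fin n → ℝ => x s + x r) ⁻¹' {(0:ℝ)}ᶜ) ∈ nhds p :=
      hU.mem_nhds (by simpa using hS)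
    have hev : (pd j Ub) =ᶠ[nhds p] (fun x => gfun (Lmap n s r x) * dphi j x
        + (x s * (x s + x r)⁻¹) * pd (σ j) gfun (Lmap n s r x)) :=
      Filter.eventuallyEq_of_mem hmem (fun x hx => hfirst x (by simpa using hx) j)
    -- derivative of dphi j at p
    have hdd : ∃ Dd : (Fin n → ℝ) →L[ℝ] ℝ, HasFDerivAt (dphi j) Dd p ∧
        ∀ i', Dd (Pi.single i' 1) = DD i' j := by
      have hsum2 : HasFDerivAt (fun y : Fin n → ℝ => y s + y r)
          ((ContinuousLinearMap.proj s : (Fin n → ℝ) →L[ℝ] ℝ) + ContinuousLinearMap.proj r) p :=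
        ((ContinuousLinearMap.proj s : (Fin n → ℝ) →L[ℝ] ℝ).hasFDerivAt).add
          ((ContinuousLinearMap.proj r : (Fin n → ℝ) →L[ℝ] ℝ).hasFDerivAt)
      have hsq : HasFDerivAt (fun y : Fin n → ℝ => (y s + y r)^2)
          ((p s + p r) • ((ContinuousLinearMap.proj s : (Fin n → ℝ) →L[ℝ] ℝ)
              + ContinuousLinearMap.proj r)
            + (p s + p r) • ((ContinuousLinearMap.proj s : (Fin n → ℝ) →L[ℝ] ℝ)
              + ContinuousLinearMap.proj r)) p := by
        have h2 : (fun y : Fin n → ℝ => (y s + y r)^2)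
            = fun y => (y s + y r) * (y s + y r) := by funext y; ring
        rw [h2]; exact hsum2.mul hsum2
      have hinv2 : HasFDerivAt (fun y : Fin n → ℝ => (((y s + y r)^2))⁻¹)
          ((ContinuousLinearMap.smulRight (1 : ℝ →L[ℝ] ℝ) (-(((p s + p r) ^ 2) ^ 2)⁻¹)).comp
            ((p s + p r) • ((ContinuousLinearMap.proj s : (Fin n → ℝ) →L[ℝ] ℝ)
                + ContinuousLinearMap.proj r)
              + (p s + p r) • ((ContinuousLinearMap.proj s : (Fin n → ℝ) →L[ℝ] ℝ)
                + ContinuousLinearMap.proj r))) p :=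
        (hasFDerivAt_inv (pow_ne_zero 2 hS)).comp p hsq
      rcases eq_or_ne j s with hjs | hjs
      · have hfun : dphi j = fun y : Fin n → ℝ => y r * (((y s + y r)^2)⁻¹) := by
          rw [hdphi]; funext y; simp [hjs, div_eq_mul_inv]
        have hbuilt : HasFDerivAt (dphi j)
            (p r • ((ContinuousLinearMap.smulRight (1 : ℝ →L[ℝ] ℝ)
                (-(((p s + p r) ^ 2) ^ 2)⁻¹)).comp
              ((p s + p r) • ((ContinuousLinearMap.proj s : (Fin n → ℝ) →L[ℝ] ℝ)
                  + ContinuousLinearMap.proj r)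
                + (p s + p r) • ((ContinuousLinearMap.proj s : (Fin n → ℝ) →L[ℝ] ℝ)
                  + ContinuousLinearMap.proj r)))
              + (((p s + p r)^2)⁻¹) • (ContinuousLinearMap.proj r : (Fin n → ℝ) →L[ℝ] ℝ)) p := by
          rw [hfun]
          exact ((ContinuousLinearMap.proj r : (Fin n → ℝ) →L[ℝ] ℝ).hasFDerivAt).mul hinv2
        refine ⟨_, hbuilt, ?_⟩
        intro i'
        simp only [ContinuousLinearMap.add_apply, ContinuousLinearMap.smul_apply,
          ContinuousLinearMap.comp_apply, ContinuousLinearMap.smulRight_apply,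
          ContinuousLinearMap.one_apply, ContinuousLinearMap.proj_apply, smul_eq_mul,
          Pi.single_apply, hDD, hjs]
        rcases eq_or_ne i' s with rfl | his
        · simp only [if_pos rfl, if_neg (Ne.symm hsr), if_neg hsr, ↓reduceIte]
          field_simp
          ring
        · rcases eq_or_ne i' r with rfl | hir
          · simp only [if_pos rfl, if_neg his, if_neg (Ne.symm his), ↓reduceIte]
            field_simp
            ring
          · simp [if_neg his, if_neg hir, if_neg (Ne.symm his), if_neg (Ne.symm hir)]
      · rcases eq_or_ne j r with hjr | hjr
        · have hfun : dphi j = fun y : Fin n → ℝ => (-(y s)) * (((y s + y r)^2)⁻¹) := by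
            rw [hdphi]; funext y
            simp [hjr, Ne.symm hsr, div_eq_mul_inv, neg_mul]
          have hbuilt : HasFDerivAt (dphi j)
              ((-(p s)) • ((ContinuousLinearMap.smulRight (1 : ℝ →L[ℝ] ℝ)
                  (-(((p s + p r) ^ 2) ^ 2)⁻¹)).comp
                ((p s + p r) • ((ContinuousLinearMap.proj s : (Fin n → ℝ) →L[ℝ] ℝ)
                    + ContinuousLinearMap.proj r)
                  + (p s + p r) • ((ContinuousLinearMap.proj s : (Fin n → ℝ) →L[ℝ] ℝ)
                    + ContinuousLinearMap.proj r)))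
                + (((p s + p r)^2)⁻¹) •
                  (-(ContinuousLinearMap.proj s : (Fin n → ℝ) →L[ℝ] ℝ))) p := by
            rw [hfun]
            exact (((ContinuousLinearMap.proj s : (Fin n → ℝ) →L[ℝ] ℝ).hasFDerivAt).neg).mul hinv2
          refine ⟨_, hbuilt, ?_⟩
          intro i'
          simp only [ContinuousLinearMap.add_apply, ContinuousLinearMap.smul_apply,
            ContinuousLinearMap.comp_apply, ContinuousLinearMap.smulRight_apply,
            ContinuousLinearMap.one_apply, ContinuousLinearMap.proj_apply, smul_eq_mul,
            ContinuousLinearMap.neg_apply, Pi.single_apply, hDD, hjr,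
            if_neg (Ne.symm hsr)]
          rcases eq_or_ne i' s with rfl | his
          · simp only [if_pos rfl, if_neg (Ne.symm hsr), if_neg hsr, ↓reduceIte]
            field_simp
            ring
          · rcases eq_or_ne i' r with rfl | hir
            · simp only [if_pos rfl, if_neg his, if_neg (Ne.symm his), if_neg (Ne.symm hsr), ↓reduceIte]
              field_simp
              ring
            · simp [if_neg his, if_neg hir, if_neg (Ne.symm his), if_neg (Ne.symm hir),
                if_neg (Ne.symm hsr)]
        · have hfun : dphi j = fun _ : Fin n → ℝ => (0:ℝ) := by
            rw [hdphi]; funext y; simp [hjs, hjr]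
          refine ⟨0, by rw [hfun]; exact hasFDerivAt_const 0 p, ?_⟩
          intro i'
          simp [hDD, hjs, hjr]
    obtain ⟨Dd, hDdF, hDdApp⟩ := hdd
    have hgLp : HasFDerivAt (fun y => gfun (Lmap n s r y))
        ((fderiv ℝ gfun (Lmap n s r p)).comp (Lmap n s r)) p :=
      (hgd (Lmap n s r p)).hasFDerivAt.comp p (Lmap n s r).hasFDerivAt
    have hpsi : HasFDerivAt (fun y => pd (σ j) gfun (Lmap n s r y))
        ((fderiv ℝ (pd (σ j) gfun) (Lmap n s r p)).comp (Lmap n s r)) p :=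
      (((hpdg (σ j)).differentiable (by simp)) (Lmap n s r p)).hasFDerivAt.comp p
        (Lmap n s r).hasFDerivAt
    have hphip := phi_hasFDeriv s r p hS
    have hFd : HasFDerivAt (fun x => gfun (Lmap n s r x) * dphi j x
        + (x s * (x s + x r)⁻¹) * pd (σ j) gfun (Lmap n s r x))
        ((gfun (Lmap n s r p) • Dd
            + dphi j p • ((fderiv ℝ gfun (Lmap n s r p)).comp (Lmap n s r)))
          + ((p s * (p s + p r)⁻¹) •
              ((fderiv ℝ (pd (σ j) gfun) (Lmap n s r p)).comp (Lmap n s r))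
            + pd (σ j) gfun (Lmap n s r p) •
              (p s • ((ContinuousLinearMap.smulRight (1 : ℝ →L[ℝ] ℝ)
                  (-((p s + p r) ^ 2)⁻¹)).comp
                  ((ContinuousLinearMap.proj s : (Fin n → ℝ) →L[ℝ] ℝ)
                    + ContinuousLinearMap.proj r))
                + (p s + p r)⁻¹ •
                  (ContinuousLinearMap.proj s : (Fin n → ℝ) →L[ℝ] ℝ)))) p :=
      (hgLp.mul hDdF).add (hphip.mul hpsi)
    have hstep : pd i (pd j Ub) p = fderiv ℝ (fun x => gfun (Lmap n s r x) * dphi j x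
        + (x s * (x s + x r)⁻¹) * pd (σ j) gfun (Lmap n s r x)) p (Pi.single i 1) := by
      show fderiv ℝ (pd j Ub) p (Pi.single i 1) = _
      rw [hev.fderiv_eq]
    rw [hstep, hFd.fderiv]
    rw [ContinuousLinearMap.add_apply, ContinuousLinearMap.add_apply,
      ContinuousLinearMap.add_apply, ContinuousLinearMap.smul_apply,
      ContinuousLinearMap.smul_apply, ContinuousLinearMap.smul_apply,
      ContinuousLinearMap.smul_apply, ContinuousLinearMap.comp_apply,
      ContinuousLinearMap.comp_apply, Lmap_single hsr, phi_deriv_apply hsr p hS, hDdApp i,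
      hLp]
    have hdj : dphi j p = d j := by rw [hdphi, hd]
    have hdi : (if i = s then p r / (p s + p r) ^ 2 else
        if i = r then -(p s) / (p s + p r) ^ 2 else 0) = d i := by rw [hd]
    rw [hdj, hdi]
    have hfd1 : fderiv ℝ gfun q (Pi.single (if i = r then s else i) 1) = pd (σ i) gfun q := by
      rw [hσ]; rfl
    have hfd2 : fderiv ℝ (pd (σ j) gfun) q (Pi.single (if i = r then s else i) 1)
        = pd (σ i) (pd (σ j) gfun) q := by rw [hσ]; rfl
    rw [hfd1, hfd2]
    simp only [smul_eq_mul, div_eq_mul_inv]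
    ring
  -- the equation satisfied by v at q
  have hmemrest : ∀ i ∈ (Finset.univ.erase s).erase r, i ≠ s ∧ i ≠ r := by
    intro i hi
    rw [Finset.mem_erase, Finset.mem_erase] at hi
    exact ⟨hi.2.1, hi.1⟩
  have hqsum : (∑ i, q i) = ∑ i, p i := by
    rw [sum_split hsr q, sum_split hsr p, hqs, hqr]
    have hrest : (∑ i ∈ (Finset.univ.erase s).erase r, q i)
        = ∑ i ∈ (Finset.univ.erase s).erase r, p i := by
      refine Finset.sum_congr rfl (fun i hi => ?_)
      obtain ⟨h1, h2⟩ := hmemrest i hi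
      exact hqother i h1 h2
    rw [hrest]; ring
  have hqeq : -(deriv (fun τ => v q τ) t) =
      (1/2) * ∑ i, ∑ j, q i * ((if i = j then (1:ℝ) else 0) - q j) *
        pd i (pd j gfun) q := by
    have hpos : ∀ i, i ≠ r → 0 < q i := by
      intro i hir
      rcases eq_or_ne i s with rfl | his
      · rw [hqs]; exact hS0
      · rw [hqother i his hir]; exact hp i
    have hlt : (∑ i, q i) < 1 := by rw [hqsum]; exact hpsum
    rw [hgfun]
    exact heq q hqr hpos hlt t ht
  -- time derivative
  have htime : deriv (fun τ => ub p τ) t = deriv (fun τ => v q τ) t * (p s / (p s + p r)) := by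
    have hfun : (fun τ => ub p τ) = fun τ => v q τ * (p s / (p s + p r)) := by
      funext τ; rw [hub, ← hqdef]
    have hdiff : DifferentiableAt ℝ (fun τ => v q τ) t := by
      have hcd : ContDiff ℝ (⊤ : ℕ∞) (fun τ : ℝ => v q τ) :=
        hsmooth.comp (ContDiff.prodMk contDiff_const contDiff_id)
      exact (hcd.differentiable (by simp)) t
    rw [hfun, deriv_mul_const hdiff]
  -- final algebra
  have h2 : (∑ i, ∑ j, p i * ((if i = j then (1:ℝ) else 0) - p j) * (pd (σ j) gfun q * d i))
      = 0 := by
    have e0 : ∀ i, i ≠ s → i ≠ r →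
        (∑ j, p i * ((if i = j then (1:ℝ) else 0) - p j) * (pd (σ j) gfun q * d i)) = 0 := by
      intro i his hir
      refine Finset.sum_eq_zero (fun j _ => ?_)
      rw [hd]; simp [his, hir]
    rw [two_point hsr _ e0]
    rw [← Finset.sum_add_distrib]
    have e1 : ∀ j, j ≠ s → j ≠ r →
        (p s * ((if s = j then (1:ℝ) else 0) - p j) * (pd (σ j) gfun q * d s)
          + p r * ((if r = j then (1:ℝ) else 0) - p j) * (pd (σ j) gfun q * d r)) = 0 := by
      intro j hjs hjr
      rw [hd]
      simp [Ne.symm hjs, Ne.symm hjr, Ne.symm hsr]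
      ring
    rw [two_point hsr _ e1]
    rw [hd, hσ]
    simp [hsr, Ne.symm hsr]
    ring
  have h3 : (∑ i, ∑ j, p i * ((if i = j then (1:ℝ) else 0) - p j) * (pd (σ i) gfun q * d j))
      = 0 := by
    rw [Finset.sum_comm]
    have e0 : ∀ j, j ≠ s → j ≠ r →
        (∑ i, p i * ((if i = j then (1:ℝ) else 0) - p j) * (pd (σ i) gfun q * d j)) = 0 := by
      intro j hjs hjr
      refine Finset.sum_eq_zero (fun i _ => ?_)
      rw [hd]; simp [hjs, hjr]
    rw [two_point hsr _ e0]
    rw [← Finset.sum_add_distrib]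
    have e1 : ∀ i, i ≠ s → i ≠ r →
        (p i * ((if i = s then (1:ℝ) else 0) - p s) * (pd (σ i) gfun q * d s)
          + p i * ((if i = r then (1:ℝ) else 0) - p r) * (pd (σ i) gfun q * d r)) = 0 := by
      intro i his hir
      rw [hd]
      simp [his, hir, Ne.symm hsr]
      ring
    rw [two_point hsr _ e1]
    rw [hd, hσ]
    simp [hsr, Ne.symm hsr]
    ring
  have h4 : (∑ i, ∑ j, p i * ((if i = j then (1:ℝ) else 0) - p j) * (gfun q * DD i j))
      = 0 := by
    have e0 : ∀ i, i ≠ s → i ≠ r →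
        (∑ j, p i * ((if i = j then (1:ℝ) else 0) - p j) * (gfun q * DD i j)) = 0 := by
      intro i his hir
      refine Finset.sum_eq_zero (fun j _ => ?_)
      rw [hDD]; simp [his, hir]
    rw [two_point hsr _ e0]
    rw [← Finset.sum_add_distrib]
    have e1 : ∀ j, j ≠ s → j ≠ r →
        (p s * ((if s = j then (1:ℝ) else 0) - p j) * (gfun q * DD s j)
          + p r * ((if r = j then (1:ℝ) else 0) - p j) * (gfun q * DD r j)) = 0 := by
      intro j hjs hjr
      rw [hDD]
      simp [hjs, hjr, Ne.symm hjs, Ne.symm hjr]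
    rw [two_point hsr _ e1]
    rw [hDD]
    simp [hsr, Ne.symm hsr]
    ring
  have h1 : (∑ i, ∑ j, p i * ((if i = j then (1:ℝ) else 0) - p j) *
        (p s / (p s + p r) * pd (σ i) (pd (σ j) gfun) q))
      = p s / (p s + p r) * ∑ i, ∑ j, q i * ((if i = j then (1:ℝ) else 0) - q j) *
        pd i (pd j gfun) q := by
    simp only [Finset.mul_sum]
    have hrow : ∀ i ∈ (Finset.univ.erase s).erase r,
        (∑ j, p i * ((if i = j then (1:ℝ) else 0) - p j)
            * (p s / (p s + p r) * pd (σ i) (pd (σ j) gfun) q))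
          = ∑ j, p s / (p s + p r) * (q i * ((if i = j then (1:ℝ) else 0) - q j)
            * pd i (pd j gfun) q) := by
      intro i hi
      obtain ⟨his, hir⟩ := hmemrest i hi
      rw [sum_split hsr (fun j => p i * ((if i = j then (1:ℝ) else 0) - p j)
            * (p s / (p s + p r) * pd (σ i) (pd (σ j) gfun) q)),
          sum_split hsr (fun j => p s / (p s + p r)
            * (q i * ((if i = j then (1:ℝ) else 0) - q j) * pd i (pd j gfun) q))]
      have hc : p i * ((if i = s then (1:ℝ) else 0) - p s)
            * (p s / (p s + p r) * pd (σ i) (pd (σ s) gfun) q)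
          + p i * ((if i = r then (1:ℝ) else 0) - p r)
            * (p s / (p s + p r) * pd (σ i) (pd (σ r) gfun) q)
          = p s / (p s + p r) * (q i * ((if i = s then (1:ℝ) else 0) - q s)
              * pd i (pd s gfun) q)
            + p s / (p s + p r) * (q i * ((if i = r then (1:ℝ) else 0) - q r)
              * pd i (pd r gfun) q) := by
        rw [hσ]
        simp [hsr, Ne.symm hsr, his, hir, hqs, hqr, hqother i his hir]
        ring
      have hrest : (∑ j ∈ (Finset.univ.erase s).erase r,
            p i * ((if i = j then (1:ℝ) else 0) - p j)
              * (p s / (p s + p r) * pd (σ i) (pd (σ j) gfun) q))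
          = ∑ j ∈ (Finset.univ.erase s).erase r,
            p s / (p s + p r) * (q i * ((if i = j then (1:ℝ) else 0) - q j)
              * pd i (pd j gfun) q) := by
        refine Finset.sum_congr rfl (fun j hj => ?_)
        obtain ⟨hjs, hjr⟩ := hmemrest j hj
        rw [hσ]
        simp [his, hir, hjs, hjr, hqother i his hir, hqother j hjs hjr]
        ring
      rw [hrest]
      linarith [hc]
    rw [sum_split hsr (fun i => ∑ j, p i * ((if i = j then (1:ℝ) else 0) - p j)
          * (p s / (p s + p r) * pd (σ i) (pd (σ j) gfun) q)),
        sum_split hsr (fun i => ∑ j, p s / (p s + p r)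
          * (q i * ((if i = j then (1:ℝ) else 0) - q j) * pd i (pd j gfun) q))]
    rw [Finset.sum_congr rfl hrow]
    have hrowsr : (∑ j, p s * ((if s = j then (1:ℝ) else 0) - p j)
            * (p s / (p s + p r) * pd (σ s) (pd (σ j) gfun) q))
          + (∑ j, p r * ((if r = j then (1:ℝ) else 0) - p j)
            * (p s / (p s + p r) * pd (σ r) (pd (σ j) gfun) q))
        = (∑ j, p s / (p s + p r) * (q s * ((if s = j then (1:ℝ) else 0) - q j)
            * pd s (pd j gfun) q))
          + (∑ j, p s / (p s + p r) * (q r * ((if r = j then (1:ℝ) else 0) - q j)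
            * pd r (pd j gfun) q)) := by
      rw [← Finset.sum_add_distrib, ← Finset.sum_add_distrib]
      rw [sum_split hsr (fun j => p s * ((if s = j then (1:ℝ) else 0) - p j)
              * (p s / (p s + p r) * pd (σ s) (pd (σ j) gfun) q)
            + p r * ((if r = j then (1:ℝ) else 0) - p j)
              * (p s / (p s + p r) * pd (σ r) (pd (σ j) gfun) q)),
          sum_split hsr (fun j => p s / (p s + p r)
              * (q s * ((if s = j then (1:ℝ) else 0) - q j) * pd s (pd j gfun) q)
            + p s / (p s + p r)
              * (q r * ((if r = j then (1:ℝ) else 0) - q j) * pd r (pd j gfun) q))]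
      have hcorner : (p s * ((if s = s then (1:ℝ) else 0) - p s)
              * (p s / (p s + p r) * pd (σ s) (pd (σ s) gfun) q)
            + p r * ((if r = s then (1:ℝ) else 0) - p s)
              * (p s / (p s + p r) * pd (σ r) (pd (σ s) gfun) q))
          + (p s * ((if s = r then (1:ℝ) else 0) - p r)
              * (p s / (p s + p r) * pd (σ s) (pd (σ r) gfun) q)
            + p r * ((if r = r then (1:ℝ) else 0) - p r)
              * (p s / (p s + p r) * pd (σ r) (pd (σ r) gfun) q))
          = (p s / (p s + p r)
              * (q s * ((if s = s then (1:ℝ) else 0) - q s) * pd s (pd s gfun) q)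
            + p s / (p s + p r)
              * (q r * ((if r = s then (1:ℝ) else 0) - q s) * pd r (pd s gfun) q))
          + (p s / (p s + p r)
              * (q s * ((if s = r then (1:ℝ) else 0) - q r) * pd s (pd r gfun) q)
            + p s / (p s + p r)
              * (q r * ((if r = r then (1:ℝ) else 0) - q r) * pd r (pd r gfun) q)) := by
        rw [hσ]
        simp [hsr, Ne.symm hsr, hqs, hqr]
        ring
      have hrest2 : ∀ j ∈ (Finset.univ.erase s).erase r,
          (p s * ((if s = j then (1:ℝ) else 0) - p j)
              * (p s / (p s + p r) * pd (σ s) (pd (σ j) gfun) q)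
            + p r * ((if r = j then (1:ℝ) else 0) - p j)
              * (p s / (p s + p r) * pd (σ r) (pd (σ j) gfun) q))
          = (p s / (p s + p r)
              * (q s * ((if s = j then (1:ℝ) else 0) - q j) * pd s (pd j gfun) q)
            + p s / (p s + p r)
              * (q r * ((if r = j then (1:ℝ) else 0) - q j) * pd r (pd j gfun) q)) := by
        intro j hj
        obtain ⟨hjs, hjr⟩ := hmemrest j hj
        rw [hσ]
        simp [hsr, Ne.symm hsr, hjs, hjr, Ne.symm hjs, Ne.symm hjr, hqs, hqr,
          hqother j hjs hjr]
        ring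
      rw [Finset.sum_congr rfl hrest2]
      linarith [hcorner]
    linarith [hrowsr]
  -- assemble
  have hsumUb : (∑ i, ∑ j, p i * ((if i = j then (1:ℝ) else 0) - p j)
        * pd i (pd j (fun x => ub x t)) p)
      = p s / (p s + p r) * ∑ i, ∑ j, q i * ((if i = j then (1:ℝ) else 0) - q j) *
        pd i (pd j gfun) q := by
    rw [hubt]
    calc (∑ i, ∑ j, p i * ((if i = j then (1:ℝ) else 0) - p j) * pd i (pd j Ub) p)
        = ∑ i, ∑ j, (p i * ((if i = j then (1:ℝ) else 0) - p j) *
              (p s / (p s + p r) * pd (σ i) (pd (σ j) gfun) q)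
            + p i * ((if i = j then (1:ℝ) else 0) - p j) * (pd (σ j) gfun q * d i)
            + p i * ((if i = j then (1:ℝ) else 0) - p j) * (pd (σ i) gfun q * d j)
            + p i * ((if i = j then (1:ℝ) else 0) - p j) * (gfun q * DD i j)) := by
          refine Finset.sum_congr rfl (fun i _ => Finset.sum_congr rfl (fun j _ => ?_))
          rw [hsecond i j]; ring
      _ = p s / (p s + p r) * ∑ i, ∑ j, q i * ((if i = j then (1:ℝ) else 0) - q j) *
            pd i (pd j gfun) q := by
          simp only [Finset.sum_add_distrib]
          rw [h1, h2, h3, h4]; ring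
  show -(deriv (fun τ => ub p τ) t) = (1/2) * ∑ i, ∑ j,
    p i * ((if i = j then (1:ℝ) else 0) - p j) * pd i (pd j (fun x => ub x t)) p
  rw [htime, hsumUb, ← neg_mul, hqeq]
  ring
end

section
/- The full blow-up map p̃^{i_j} = (p^{i_j}+⋯+p^{i_n})/(p^{i_{j−1}}+⋯+p^{i_n}) (for j ≥ 2, p̃^{i_1} = Σ_{j=1}^n p^{i_j}) maps the open d-dimensional face Δ_d^{(I_d)} = {p : p^{i_1},…,p^{i_d} > 0, p^{i_{d+1}} = ⋯ = p^{i_n} = 0, Σ p^{i_j} < 1} bijectively onto the open subcube {p̃ : p̃^{i_1},…,p̃^{i_d} ∈ (0,1), p̃^{i_{d+1}} = ⋯ = p̃^{i_n} = 0}, for each d = 0,…,n. -/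
/-- The full blow-up map F maps each open d-dimensional face Δ_d^{(I_d)}
of the simplex bijectively onto the corresponding open subcube of the unit cube. -/
theorem full_blowup_maps_faces (n : ℕ) (i : Fin n → Fin n) (hi : Function.Bijective i)
    (T : (Fin n → ℝ) → ℕ → ℝ)
    (hT : ∀ p m, T p m = ∑ l ∈ Finset.univ.filter (fun l : Fin n => m ≤ l.val), p (i l))
    (F : (Fin n → ℝ) → (Fin n → ℝ))
    (hF : ∀ p (j : Fin n), F p (i j) =
      if j.val = 0 then T p 0 else T p j.val / T p (j.val - 1))
    (d : ℕ) (hdn : d ≤ n) :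
    Set.BijOn F
      {p | (∀ j : Fin n, j.val < d → 0 < p (i j)) ∧
           (∀ j : Fin n, d ≤ j.val → p (i j) = 0) ∧ (∑ l, p (i l)) < 1}
      {q | (∀ j : Fin n, j.val < d → q (i j) ∈ Set.Ioo (0:ℝ) 1) ∧
           (∀ j : Fin n, d ≤ j.val → q (i j) = 0)} := by
  classical
  rcases Nat.eq_zero_or_pos n with hn | hn
  · subst hn
    refine ⟨?_, ?_, ?_⟩
    · intro p _
      exact ⟨fun j _ => j.elim0, fun j _ => j.elim0⟩
    · intro p _ q _ _
      funext x; exact x.elim0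
    · intro q _
      refine ⟨q, ⟨fun j _ => j.elim0, fun j _ => j.elim0, by simp⟩, ?_⟩
      funext x; exact x.elim0
  -- n > 0 case
  set σ := Equiv.ofBijective i hi with hσdef
  have hiσ : ∀ x, i (σ.symm x) = x := fun x => σ.apply_symm_apply x
  have hσi : ∀ j, σ.symm (i j) = j := fun j => σ.symm_apply_apply j
  -- T vanishes past n
  have hTempty : ∀ p m, n ≤ m → T p m = 0 := by
    intro p m hm
    rw [hT]
    apply Finset.sum_eq_zero
    intro l hl
    simp only [Finset.mem_filter] at hl
    omega
  -- recursion for T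
  have hTstep : ∀ p m (h : m < n), T p m = p (i ⟨m, h⟩) + T p (m + 1) := by
    intro p m h
    rw [hT, hT]
    have hset : (Finset.univ.filter (fun l : Fin n => m ≤ l.val)) =
        insert ⟨m, h⟩ (Finset.univ.filter (fun l : Fin n => m + 1 ≤ l.val)) := by
      ext l
      simp only [Finset.mem_filter, Finset.mem_insert, Finset.mem_univ, true_and]
      constructor
      · intro hl
        rcases eq_or_lt_of_le hl with h1 | h1
        · left; exact Fin.ext h1.symm
        · right; omega
      · rintro (rfl | hl)
        · exact le_refl _
        · omega
    rw [hset, Finset.sum_insert (by simp)]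
  -- facts about T on the face
  have hTzero : ∀ p, (∀ j : Fin n, d ≤ j.val → p (i j) = 0) → ∀ m, d ≤ m → T p m = 0 := by
    intro p hp m hm
    rw [hT]
    apply Finset.sum_eq_zero
    intro l hl
    simp only [Finset.mem_filter] at hl
    exact hp l (by omega)
  have hTpos : ∀ p, (∀ j : Fin n, j.val < d → 0 < p (i j)) →
      (∀ j : Fin n, d ≤ j.val → p (i j) = 0) → ∀ m, m < d → 0 < T p m := by
    intro p hp1 hp2 m hm
    rw [hT]
    apply Finset.sum_pos'
    · intro l _
      by_cases hl : l.val < d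
      · exact le_of_lt (hp1 l hl)
      · rw [hp2 l (by omega)]
    · refine ⟨⟨m, by omega⟩, ?_, hp1 _ hm⟩
      simp
  have hT0 : ∀ p, T p 0 = ∑ l, p (i l) := by
    intro p
    rw [hT]
    congr 1
    simp
  -- Maps To
  have hmaps : Set.MapsTo F
      {p | (∀ j : Fin n, j.val < d → 0 < p (i j)) ∧
           (∀ j : Fin n, d ≤ j.val → p (i j) = 0) ∧ (∑ l, p (i l)) < 1}
      {q | (∀ j : Fin n, j.val < d → q (i j) ∈ Set.Ioo (0:ℝ) 1) ∧
           (∀ j : Fin n, d ≤ j.val → q (i j) = 0)} := by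
    rintro p ⟨hp1, hp2, hp3⟩
    constructor
    · intro j hj
      rw [hF]
      by_cases h0 : j.val = 0
      · rw [if_pos h0]
        refine ⟨hTpos p hp1 hp2 0 (show 0 < d by omega), ?_⟩
        rw [hT0]; exact hp3
      · rw [if_neg h0]
        have hprev : j.val - 1 < d := by omega
        have hTp : 0 < T p (j.val - 1) := hTpos p hp1 hp2 _ hprev
        refine ⟨div_pos (hTpos p hp1 hp2 _ hj) hTp, ?_⟩
        rw [div_lt_one hTp]
        have hstep := hTstep p (j.val - 1) (by omega)
        have he : j.val - 1 + 1 = j.val := by omega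
        rw [he] at hstep
        rw [hstep]
        exact lt_add_of_pos_left _ (hp1 ⟨j.val - 1, by omega⟩ hprev)
    · intro j hj
      rw [hF]
      by_cases h0 : j.val = 0
      · rw [if_pos h0]
        exact hTzero p hp2 0 (show d ≤ 0 by omega)
      · rw [if_neg h0]
        rw [hTzero p hp2 j.val hj, zero_div]
  refine ⟨hmaps, ?_, ?_⟩
  -- InjOn
  · rintro p₁ ⟨hp11, hp12, _⟩ p₂ ⟨hp21, hp22, _⟩ hFeq
    have hTeq : ∀ m, T p₁ m = T p₂ m := by
      intro m
      induction m with
      | zero =>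
        have h1 := hF p₁ ⟨0, hn⟩
        have h2 := hF p₂ ⟨0, hn⟩
        rw [if_pos rfl] at h1 h2
        rw [← h1, ← h2, hFeq]
      | succ m ih =>
        by_cases hmn : m + 1 < n
        · by_cases hc : T p₁ m = 0
          · have hd1 : d ≤ m := by
              by_contra hcon
              exact absurd hc (ne_of_gt (hTpos p₁ hp11 hp12 m (by omega)))
            rw [hTzero p₁ hp12 (m+1) (by omega), hTzero p₂ hp22 (m+1) (by omega)]
          · have h1 := hF p₁ ⟨m + 1, hmn⟩
            have h2 := hF p₂ ⟨m + 1, hmn⟩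
            simp only [Nat.succ_ne_zero, if_false, Nat.add_sub_cancel] at h1 h2
            have hc2 : T p₂ m ≠ 0 := by rw [← ih]; exact hc
            have e1 : T p₁ (m + 1) = F p₁ (i ⟨m + 1, hmn⟩) * T p₁ m := by
              rw [h1, div_mul_cancel₀ _ hc]
            have e2 : T p₂ (m + 1) = F p₂ (i ⟨m + 1, hmn⟩) * T p₂ m := by
              rw [h2, div_mul_cancel₀ _ hc2]
            rw [e1, e2, hFeq, ih]
        · rw [hTempty p₁ _ (by omega), hTempty p₂ _ (by omega)]
    funext x
    have hx : x = i (σ.symm x) := (hiσ x).symm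
    rw [hx]
    set j := σ.symm x with hj
    have h1 := hTstep p₁ j.val j.isLt
    have h2 := hTstep p₂ j.val j.isLt
    simp only [Fin.eta] at h1 h2
    have : p₁ (i j) = T p₁ j.val - T p₁ (j.val + 1) := by rw [h1]; ring
    rw [this, hTeq, hTeq, h2]; ring
  -- SurjOn
  · rintro q ⟨hq1, hq2⟩
    set t : ℕ → ℝ := fun m =>
      if m < n then ∏ l ∈ Finset.univ.filter (fun l : Fin n => l.val ≤ m), q (i l) else 0
      with ht
    have ht0 : t 0 = q (i ⟨0, hn⟩) := by
      rw [ht]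
      simp only [if_pos hn]
      have : (Finset.univ.filter (fun l : Fin n => l.val ≤ 0)) = {⟨0, hn⟩} := by
        ext l
        simp only [Finset.mem_filter, Finset.mem_univ, true_and, Finset.mem_singleton]
        constructor
        · intro h; exact Fin.ext (show l.val = 0 by omega)
        · rintro rfl; exact le_refl _
      rw [this, Finset.prod_singleton]
    have htstep : ∀ m (h : m + 1 < n), t (m + 1) = t m * q (i ⟨m + 1, h⟩) := by
      intro m h
      rw [ht]
      simp only [if_pos h, if_pos (by omega : m < n)]
      have hset : (Finset.univ.filter (fun l : Fin n => l.val ≤ m + 1)) =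
          insert ⟨m + 1, h⟩ (Finset.univ.filter (fun l : Fin n => l.val ≤ m)) := by
        ext l
        simp only [Finset.mem_filter, Finset.mem_insert, Finset.mem_univ, true_and]
        constructor
        · intro hl
          rcases eq_or_lt_of_le hl with h1 | h1
          · left; exact Fin.ext h1
          · right; omega
        · rintro (rfl | hl)
          · exact le_refl _
          · omega
      rw [hset, Finset.prod_insert (by simp), mul_comm]
    have htzero : ∀ m, d ≤ m → t m = 0 := by
      intro m hm
      rw [ht]
      by_cases hmn : m < n
      · simp only [if_pos hmn]
        apply Finset.prod_eq_zero (i := (⟨d, by omega⟩ : Fin n))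
        · simp [hm]
        · exact hq2 _ (le_refl d)
      · simp [hmn]
    have htpos : ∀ m, m < d → 0 < t m := by
      intro m hm
      rw [ht]
      simp only [if_pos (by omega : m < n)]
      apply Finset.prod_pos
      intro l hl
      simp only [Finset.mem_filter] at hl
      exact (hq1 l (by omega : l.val < d)).1
    -- define the preimage
    set p : (Fin n → ℝ) := fun x => t (σ.symm x).val - t ((σ.symm x).val + 1) with hp
    have hpj : ∀ j : Fin n, p (i j) = t j.val - t (j.val + 1) := by
      intro j
      rw [hp]
      simp only [hσi]
    have hp1 : ∀ j : Fin n, j.val < d → 0 < p (i j) := by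
      intro j hj
      rw [hpj]
      have hpos := htpos j.val hj
      by_cases h1 : j.val + 1 < d
      · have := htstep j.val (by omega)
        rw [this]
        have hqlt := (hq1 ⟨j.val + 1, by omega⟩ (show j.val + 1 < d from h1)).2
        have hqpos := (hq1 ⟨j.val + 1, by omega⟩ (show j.val + 1 < d from h1)).1
        nlinarith
      · rw [htzero (j.val + 1) (by omega)]
        linarith
    have hp2 : ∀ j : Fin n, d ≤ j.val → p (i j) = 0 := by
      intro j hj
      rw [hpj, htzero j.val hj, htzero (j.val + 1) (by omega)]
      ring
    have hp3 : (∑ l, p (i l)) < 1 := by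
      have hsum : (∑ l, p (i l)) = ∑ k ∈ Finset.range n, (t k - t (k + 1)) := by
        rw [← Fin.sum_univ_eq_sum_range (fun k => t k - t (k + 1)) n]
        exact Finset.sum_congr rfl (fun l _ => hpj l)
      rw [hsum, Finset.sum_range_sub' t, htzero n hdn, sub_zero]
      by_cases hd0 : d = 0
      · rw [htzero 0 (by omega)]; norm_num
      · rw [ht0]
        exact (hq1 ⟨0, hn⟩ (show 0 < d by omega)).2
    -- T p agrees with t
    have hTt : ∀ k m, n ≤ m + k → T p m = t m := by
      intro k
      induction k with
      | zero =>
        intro m hm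
        rw [hTempty p m (by omega), ht]
        simp [show ¬ m < n by omega]
      | succ k ih =>
        intro m hm
        by_cases hmn : m < n
        · rw [hTstep p m hmn, hpj ⟨m, hmn⟩, ih (m + 1) (by omega)]
          ring
        · rw [hTempty p m (by omega), ht]
          simp [hmn]
    have hTt' : ∀ m, T p m = t m := fun m => hTt n m (by omega)
    refine ⟨p, ⟨hp1, hp2, hp3⟩, ?_⟩
    funext x
    have hx : x = i (σ.symm x) := (hiσ x).symm
    rw [hx]
    set j := σ.symm x with hjdef
    rw [hF]
    by_cases h0 : j.val = 0
    · rw [if_pos h0, hTt', ht0]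
      congr 1
      exact congrArg i (Fin.ext h0.symm)
    · rw [if_neg h0, hTt', hTt']
      obtain ⟨m, hjm⟩ : ∃ m, j.val = m + 1 := ⟨j.val - 1, by omega⟩
      by_cases hmd : m < d
      · have hst := htstep m (by omega)
        have hj' : (⟨m + 1, by omega⟩ : Fin n) = j := Fin.ext (show m + 1 = j.val from hjm.symm)
        rw [hj'] at hst
        rw [hjm, hst]
        exact mul_div_cancel_left₀ _ (ne_of_gt (htpos m hmd))
      · rw [htzero j.val (by omega), zero_div, hq2 j (by omega)]
end

section
/- The iterated extension ū(p,t) = u(Σ_{l=k}^d p^{i_l} incorporated via π, t) · ∏_{j=k}^{d−1} [p^{i_j} / Σ_{l=j}^d p^{i_l}] extends continuously to the boundary face {p^{i_d} = 0}, where it equals the previous-step extension ū^{(d−1)}(p,t), and it extends continuously by zero to every other (d−1)-dimensional face of Δ_d except the face {p^{i_{d−1}} = p^{i_d} = 0} of codimension 2. -/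
open scoped Classical
open Filter

/-- The iterated extension
ū_d(p,t) = u(π^{i_k,…,i_d}(p),t)·∏_{j=k}^{d−1} p^{i_j}/Σ_{l=j}^d p^{i_l}
extends continuously to the boundary face {p^{i_d} = 0}, where it equals the
previous-step extension ū_{d−1}, and extends continuously by zero to every other
(d−1)-dimensional face of Δ_d (the codimension-2 face {p^{i_{d−1}} = p^{i_d} = 0}
being excluded since the open faces considered avoid it).
Points are written in barycentric coordinates x : Fin (n+1) → ℝ, Σ x = 1,
and ι enumerates the extension path i_0, i_1, …, i_n. -/
theorem iterated_extension_boundary_continuity (n k d : ℕ)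
    (hkd : k + 1 ≤ d) (hdn : d ≤ n)
    (ι : ℕ → Fin (n + 1)) (hι : Set.InjOn ι (Set.Iic n))
    (u : (Fin (n + 1) → ℝ) → ℝ)
    (Δ : ℕ → Set (Fin (n + 1) → ℝ))
    (hΔ : ∀ e, Δ e = {x | (∀ m, (∃ l ≤ e, ι l = m) → 0 < x m) ∧
      (∀ m, (∀ l ≤ e, ι l ≠ m) → x m = 0) ∧ (∑ m, x m) = 1})
    -- the open (e−1)-dimensional boundary face of Δ_e on which x^{ι j} = 0 :
    (faceOf : ℕ → ℕ → Set (Fin (n + 1) → ℝ))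
    (hface : ∀ e j, faceOf e j = {x | x (ι j) = 0 ∧
      (∀ m, (∃ l ≤ e, l ≠ j ∧ ι l = m) → 0 < x m) ∧
      (∀ m, (∀ l ≤ e, ι l ≠ m) → x m = 0) ∧ (∑ m, x m) = 1})
    (π : ℕ → (Fin (n + 1) → ℝ) → (Fin (n + 1) → ℝ))
    (hπ : ∀ e x m, π e x m = if m = ι k then ∑ l ∈ Finset.Icc k e, x (ι l)
      else if ∃ l, k < l ∧ l ≤ e ∧ ι l = m then 0 else x m)
    (ub : ℕ → (Fin (n + 1) → ℝ) → ℝ)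
    (hub : ∀ e x, ub e x = u (π e x) *
      ∏ j ∈ Finset.Ico k e, (x (ι j) / ∑ l ∈ Finset.Icc j e, x (ι l)))
    -- u is continuous on the open face Δ_k and (being a proper solution)
    -- tends to zero at the boundary faces of Δ_k :
    (hucont : ContinuousOn u (Δ k))
    (hu0 : ∀ j ≤ k, ∀ x₀ ∈ faceOf k j,
      Tendsto u (nhdsWithin x₀ (Δ k)) (nhds 0)) :
    (∀ x₀ ∈ faceOf d d,
      Tendsto (ub d) (nhdsWithin x₀ (Δ d)) (nhds (ub (d - 1) x₀))) ∧
    (∀ j < d, ∀ x₀ ∈ faceOf d j,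
      Tendsto (ub d) (nhdsWithin x₀ (Δ d)) (nhds 0)) := by
  have hkd' : k < d := hkd
  have hd1 : 1 ≤ d := le_trans (Nat.le_add_left 1 k) hkd
  have hinj : ∀ l l', l ≤ d → l' ≤ d → ι l = ι l' → l = l' := fun l l' hl hl' h =>
    hι (le_trans hl hdn) (le_trans hl' hdn) h
  have hπk : ∀ x : Fin (n + 1) → ℝ, π d x (ι k) = ∑ l ∈ Finset.Icc k d, x (ι l) := by
    intro x; rw [hπ]; simp
  have hπoth : ∀ x : Fin (n + 1) → ℝ, ∀ m, m ≠ ι k →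
      (¬ ∃ l, k < l ∧ l ≤ d ∧ ι l = m) → π d x m = x m := by
    intro x m h1 h2; rw [hπ, if_neg h1, if_neg h2]
  have hπmid : ∀ x : Fin (n + 1) → ℝ, ∀ l, k < l → l ≤ d → π d x (ι l) = 0 := by
    intro x l h1 h2
    rw [hπ, if_neg, if_pos ⟨l, h1, h2, rfl⟩]
    intro h
    have := hinj l k h2 (le_of_lt hkd') h
    omega
  -- continuity of π d
  have hπc : Continuous (π d) := by
    have hfe : π d = fun x m => if m = ι k then ∑ l ∈ Finset.Icc k d, x (ι l)
        else if ∃ l, k < l ∧ l ≤ d ∧ ι l = m then 0 else x m := by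
      funext x m; exact hπ d x m
    rw [hfe]
    refine continuous_pi fun m => ?_
    by_cases h1 : m = ι k
    · simp only [if_pos h1]
      exact continuous_finset_sum _ fun l _ => continuous_apply _
    · simp only [if_neg h1]
      by_cases h2 : ∃ l, k < l ∧ l ≤ d ∧ ι l = m
      · simp only [if_pos h2]; exact continuous_const
      · simp only [if_neg h2]; exact continuous_apply _
  have hkmem : k ∈ Finset.Icc k d := Finset.mem_Icc.mpr ⟨le_refl k, le_of_lt hkd'⟩
  have hinjIcc : ∀ l ∈ Finset.Icc k d, ∀ l' ∈ Finset.Icc k d, ι l = ι l' → l = l' := by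
    intro l hl l' hl' h
    simp only [Finset.mem_Icc] at hl hl'
    exact hinj l l' hl.2 hl'.2 h
  -- π d preserves the total sum
  have hsum_eq : ∀ x : Fin (n + 1) → ℝ, (∑ m, π d x m) = ∑ m, x m := by
    intro x
    have split : ∀ g : Fin (n + 1) → ℝ, (∑ m, g m) =
        (∑ m ∈ Finset.univ.filter (fun m => m ∈ (Finset.Icc k d).image ι), g m)
        + ∑ m ∈ Finset.univ.filter (fun m => m ∉ (Finset.Icc k d).image ι), g m :=
      fun g => (Finset.sum_filter_add_sum_filter_not _ _ _).symm
    rw [split (π d x), split x]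
    congr 1
    · have hfe : Finset.univ.filter (fun m => m ∈ (Finset.Icc k d).image ι)
          = (Finset.Icc k d).image ι := by
        ext m; simp
      rw [hfe, Finset.sum_image hinjIcc, Finset.sum_image hinjIcc]
      have hz : ∀ l ∈ Finset.Icc k d, l ≠ k → π d x (ι l) = 0 := by
        intro l hl hlk
        simp only [Finset.mem_Icc] at hl
        exact hπmid x l (lt_of_le_of_ne hl.1 (Ne.symm hlk)) hl.2
      rw [Finset.sum_eq_single_of_mem k hkmem hz, hπk]
    · refine Finset.sum_congr rfl fun m hm => ?_
      simp only [Finset.mem_filter, Finset.mem_image, Finset.mem_Icc] at hm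
      refine hπoth x m ?_ ?_
      · intro h; exact hm.2 ⟨k, ⟨le_refl k, le_of_lt hkd'⟩, h.symm⟩
      · rintro ⟨l, h1, h2, h3⟩; exact hm.2 ⟨l, ⟨le_of_lt h1, h2⟩, h3⟩
  -- zero condition is preserved
  have hzmap : ∀ x : Fin (n + 1) → ℝ, (∀ m, (∀ l ≤ d, ι l ≠ m) → x m = 0) →
      ∀ m, (∀ l ≤ k, ι l ≠ m) → π d x m = 0 := by
    intro x hzero m hm
    have h1 : m ≠ ι k := fun h => (hm k (le_refl k)) h.symm
    by_cases h2 : ∃ l, k < l ∧ l ≤ d ∧ ι l = m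
    · rw [hπ, if_neg h1, if_pos h2]
    · rw [hπoth x m h1 h2]
      refine hzero m fun l hl hc => ?_
      rcases le_or_gt l k with h | h
      · exact hm l h hc
      · exact h2 ⟨l, h, hl, hc⟩
  -- π d maps Δ d into Δ k
  have hmaps : Set.MapsTo (π d) (Δ d) (Δ k) := by
    intro x hx
    rw [hΔ] at hx ⊢
    obtain ⟨hpos, hzero, hsum⟩ := hx
    refine ⟨?_, hzmap x hzero, by rw [hsum_eq]; exact hsum⟩
    rintro m ⟨l, hl, rfl⟩
    by_cases hlk : ι l = ι k
    · rw [hlk, hπk]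
      refine Finset.sum_pos (fun l' hl' => ?_) ⟨k, hkmem⟩
      simp only [Finset.mem_Icc] at hl'
      exact hpos _ ⟨l', hl'.2, rfl⟩
    · rw [hπoth x _ hlk ?_]
      · exact hpos _ ⟨l, le_trans hl (le_of_lt hkd'), rfl⟩
      · rintro ⟨l', h1, h2, h3⟩
        have := hinj l' l h2 (le_trans hl (le_of_lt hkd')) h3
        omega
  have hπtend : ∀ x₀ : Fin (n + 1) → ℝ,
      Tendsto (π d) (nhdsWithin x₀ (Δ d)) (nhdsWithin (π d x₀) (Δ k)) :=
    fun x₀ => (hπc.continuousWithinAt).tendsto_nhdsWithin hmaps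
  constructor
  · -- Part 1 : the face {x (ι d) = 0}
    intro x₀ hx₀
    rw [hface] at hx₀
    obtain ⟨h0, hpos, hzero, hsum1⟩ := hx₀
    have hposl : ∀ l ≤ d, l ≠ d → 0 < x₀ (ι l) := fun l hl hne => hpos _ ⟨l, hl, hne, rfl⟩
    have hnn : ∀ l ≤ d, 0 ≤ x₀ (ι l) := by
      intro l hl
      rcases eq_or_ne l d with rfl | h
      · exact le_of_eq h0.symm
      · exact le_of_lt (hposl l hl h)
    have hSpos : ∀ j ∈ Finset.Ico k d, 0 < ∑ l ∈ Finset.Icc j d, x₀ (ι l) := by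
      intro j hj
      simp only [Finset.mem_Ico] at hj
      refine Finset.sum_pos' (fun l hl => hnn l (Finset.mem_Icc.mp hl).2)
        ⟨j, Finset.mem_Icc.mpr ⟨le_refl j, le_of_lt hj.2⟩,
          hposl j (le_of_lt hj.2) (Nat.ne_of_lt hj.2)⟩
    have hpt : π d x₀ ∈ Δ k := by
      rw [hΔ]
      refine ⟨?_, hzmap x₀ hzero, by rw [hsum_eq]; exact hsum1⟩
      rintro m ⟨l, hl, rfl⟩
      by_cases hlk : ι l = ι k
      · rw [hlk, hπk]
        exact hSpos k (Finset.mem_Ico.mpr ⟨le_refl k, hkd'⟩)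
      · rw [hπoth x₀ _ hlk ?_]
        · exact hposl l (le_trans hl (le_of_lt hkd')) (by omega)
        · rintro ⟨l', h1, h2, h3⟩
          have := hinj l' l h2 (le_trans hl (le_of_lt hkd')) h3
          omega
    have hu_t : Tendsto (fun x => u (π d x)) (nhdsWithin x₀ (Δ d)) (nhds (u (π d x₀))) :=
      Filter.Tendsto.comp (hucont (π d x₀) hpt) (hπtend x₀)
    have hP_t : Tendsto
        (fun x : Fin (n + 1) → ℝ => ∏ j ∈ Finset.Ico k d, (x (ι j) / ∑ l ∈ Finset.Icc j d, x (ι l)))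
        (nhdsWithin x₀ (Δ d))
        (nhds (∏ j ∈ Finset.Ico k d, (x₀ (ι j) / ∑ l ∈ Finset.Icc j d, x₀ (ι l)))) := by
      refine tendsto_finset_prod _ fun j hj => ?_
      have hsc : Continuous (fun x : Fin (n + 1) → ℝ => ∑ l ∈ Finset.Icc j d, x (ι l)) :=
        continuous_finset_sum _ fun l _ => continuous_apply _
      have hc : ContinuousAt
          (fun x : Fin (n + 1) → ℝ => x (ι j) / ∑ l ∈ Finset.Icc j d, x (ι l)) x₀ :=
        ((continuous_apply _).continuousAt).div hsc.continuousAt (ne_of_gt (hSpos j hj))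
      exact hc.continuousWithinAt
    have hmul := hu_t.mul hP_t
    have hval : u (π d x₀) * ∏ j ∈ Finset.Ico k d, (x₀ (ι j) / ∑ l ∈ Finset.Icc j d, x₀ (ι l))
        = ub (d - 1) x₀ := by
      rw [hub]
      have hπeq : π d x₀ = π (d - 1) x₀ := by
        funext m
        rw [hπ, hπ]
        by_cases h1 : m = ι k
        · rw [if_pos h1, if_pos h1]
          have hins : Finset.Icc k d = insert d (Finset.Icc k (d - 1)) := by
            ext l; simp only [Finset.mem_Icc, Finset.mem_insert]; omega
          rw [hins, Finset.sum_insert (by simp only [Finset.mem_Icc]; omega), h0, zero_add]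
        · by_cases h2 : ∃ l, k < l ∧ l ≤ d - 1 ∧ ι l = m
          · obtain ⟨l, a, b, c⟩ := h2
            rw [if_neg h1, if_pos ⟨l, a, le_trans b (Nat.sub_le d 1), c⟩, if_neg h1,
              if_pos ⟨l, a, b, c⟩]
          · by_cases h3 : ∃ l, k < l ∧ l ≤ d ∧ ι l = m
            · obtain ⟨l, a, b, c⟩ := h3
              have hld : l = d := by
                by_contra hne
                exact h2 ⟨l, a, by omega, c⟩
              rw [if_neg h1, if_pos ⟨l, a, b, c⟩, if_neg h1, if_neg h2]
              rw [← c, hld]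
              exact h0.symm
            · rw [if_neg h1, if_neg h3, if_neg h1, if_neg h2]
      rw [← hπeq]
      congr 1
      have hsplit : Finset.Ico k d = insert (d - 1) (Finset.Ico k (d - 1)) := by
        ext l; simp only [Finset.mem_Ico, Finset.mem_insert]; omega
      rw [hsplit, Finset.prod_insert (by simp only [Finset.mem_Ico]; omega)]
      have hIccd : Finset.Icc (d - 1) d = {d - 1, d} := by
        ext l; simp only [Finset.mem_Icc, Finset.mem_insert, Finset.mem_singleton]; omega
      have hfac : x₀ (ι (d - 1)) / ∑ l ∈ Finset.Icc (d - 1) d, x₀ (ι l) = 1 := by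
        rw [hIccd, Finset.sum_pair (by omega : d - 1 ≠ d), h0, add_zero]
        exact div_self (ne_of_gt (hposl (d - 1) (Nat.sub_le d 1) (by omega)))
      rw [hfac, one_mul]
      refine Finset.prod_congr rfl fun j hj => ?_
      simp only [Finset.mem_Ico] at hj
      congr 1
      have hins : Finset.Icc j d = insert d (Finset.Icc j (d - 1)) := by
        ext l; simp only [Finset.mem_Icc, Finset.mem_insert]; omega
      rw [hins, Finset.sum_insert (by simp only [Finset.mem_Icc]; omega), h0, zero_add]
    rw [← hval]
    exact hmul.congr fun x => (hub d x).symm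
  · -- Part 2 : the faces {x (ι j) = 0}, j < d
    intro j hjd x₀ hx₀
    rw [hface] at hx₀
    obtain ⟨h0, hpos, hzero, hsum1⟩ := hx₀
    have hposl : ∀ l ≤ d, l ≠ j → 0 < x₀ (ι l) := fun l hl hne => hpos _ ⟨l, hl, hne, rfl⟩
    have hnn : ∀ l ≤ d, 0 ≤ x₀ (ι l) := by
      intro l hl
      rcases eq_or_ne l j with rfl | h
      · exact le_of_eq h0.symm
      · exact le_of_lt (hposl l hl h)
    have hSpos : ∀ j' ∈ Finset.Ico k d, 0 < ∑ l ∈ Finset.Icc j' d, x₀ (ι l) := by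
      intro j' hj'
      simp only [Finset.mem_Ico] at hj'
      refine Finset.sum_pos' (fun l hl => hnn l (Finset.mem_Icc.mp hl).2)
        ⟨d, Finset.mem_Icc.mpr ⟨le_of_lt hj'.2, le_refl d⟩,
          hposl d (le_refl d) (by omega)⟩
    have hP_t : Tendsto
        (fun x : Fin (n + 1) → ℝ => ∏ j ∈ Finset.Ico k d, (x (ι j) / ∑ l ∈ Finset.Icc j d, x (ι l)))
        (nhdsWithin x₀ (Δ d))
        (nhds (∏ j ∈ Finset.Ico k d, (x₀ (ι j) / ∑ l ∈ Finset.Icc j d, x₀ (ι l)))) := by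
      refine tendsto_finset_prod _ fun j' hj' => ?_
      have hsc : Continuous (fun x : Fin (n + 1) → ℝ => ∑ l ∈ Finset.Icc j' d, x (ι l)) :=
        continuous_finset_sum _ fun l _ => continuous_apply _
      have hc : ContinuousAt
          (fun x : Fin (n + 1) → ℝ => x (ι j') / ∑ l ∈ Finset.Icc j' d, x (ι l)) x₀ :=
        ((continuous_apply _).continuousAt).div hsc.continuousAt (ne_of_gt (hSpos j' hj'))
      exact hc.continuousWithinAt
    rcases lt_or_ge j k with hjk | hkj
    · -- j < k : u tends to 0 and the product converges
      have hface_mem : π d x₀ ∈ faceOf k j := by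
        rw [hface]
        refine ⟨?_, ?_, hzmap x₀ hzero, by rw [hsum_eq]; exact hsum1⟩
        · have h1 : ι j ≠ ι k := by
            intro h
            have := hinj j k (by omega) (le_of_lt hkd') h
            omega
          rw [hπoth x₀ _ h1 ?_]
          · exact h0
          · rintro ⟨l, a, b, c⟩
            have := hinj l j b (by omega) c
            omega
        · rintro m ⟨l, hl, hlj, rfl⟩
          by_cases hlk : ι l = ι k
          · rw [hlk, hπk]
            exact hSpos k (Finset.mem_Ico.mpr ⟨le_refl k, hkd'⟩)
          · rw [hπoth x₀ _ hlk ?_]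
            · exact hposl l (le_trans hl (le_of_lt hkd')) hlj
            · rintro ⟨l', h1, h2, h3⟩
              have := hinj l' l h2 (le_trans hl (le_of_lt hkd')) h3
              omega
      have hu_t : Tendsto (fun x => u (π d x)) (nhdsWithin x₀ (Δ d)) (nhds 0) :=
        (hu0 j (le_of_lt hjk) _ hface_mem).comp (hπtend x₀)
      have hmul := hu_t.mul hP_t
      rw [zero_mul] at hmul
      exact hmul.congr fun x => (hub d x).symm
    · -- k ≤ j < d : u converges and the product tends to 0
      have hpt : π d x₀ ∈ Δ k := by
        rw [hΔ]
        refine ⟨?_, hzmap x₀ hzero, by rw [hsum_eq]; exact hsum1⟩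
        rintro m ⟨l, hl, rfl⟩
        by_cases hlk : ι l = ι k
        · rw [hlk, hπk]
          exact hSpos k (Finset.mem_Ico.mpr ⟨le_refl k, hkd'⟩)
        · have hlj : l ≠ j := by
            intro h
            have hlk' : l ≠ k := by
              intro h'
              exact hlk (by rw [h'])
            omega
          rw [hπoth x₀ _ hlk ?_]
          · exact hposl l (le_trans hl (le_of_lt hkd')) hlj
          · rintro ⟨l', h1, h2, h3⟩
            have := hinj l' l h2 (le_trans hl (le_of_lt hkd')) h3
            omega
      have hu_t : Tendsto (fun x => u (π d x)) (nhdsWithin x₀ (Δ d)) (nhds (u (π d x₀))) :=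
        Filter.Tendsto.comp (hucont (π d x₀) hpt) (hπtend x₀)
      have hP0 : (∏ j' ∈ Finset.Ico k d, (x₀ (ι j') / ∑ l ∈ Finset.Icc j' d, x₀ (ι l))) = 0 :=
        Finset.prod_eq_zero (Finset.mem_Ico.mpr ⟨hkj, hjd⟩) (by rw [h0, zero_div])
      have hmul := hu_t.mul hP_t
      rw [hP0, mul_zero] at hmul
      exact hmul.congr fun x => (hub d x).symm
end

section
/- Under the full blow-up transformation, the iterated extension ū^{i_0,…,i_n}(p) = u(1)·∏_{j=0}^{n−1}[p^{i_j}/Σ_{l=j}^n p^{i_l}] on the open n-simplex (with p^{i_0} = 1 − Σ_{j=1}^n p^{i_j}) transforms into the function Ũ(p̃) = u(1)·∏_{j=1}^n (1 − p̃^{i_j}) on the open cube (0,1)^n; i.e., ū^{i_0,…,i_n}(p) = u(1)·∏_{j=1}^n (1 − p̃^{i_j}(p)) where p̃(p) is the full blow-up. -/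
/-- Under the full blow-up p̃ = F(p), the iterated extension
ū^{i_0,…,i_n}(p) = u(1)·∏_{j=0}^{n−1} p^{i_j}/Σ_{l=j}^n p^{i_l}
(with p^{i_0} = 1 − Σ_{j=1}^n p^{i_j}) equals u(1)·∏_{j=1}^n (1 − p̃^{i_j}(p))
on the open n-simplex. Here c = u(1) is the starting vertex value. -/
theorem iterated_extension_transforms (n : ℕ) (hn : 0 < n)
    (i : Fin n → Fin n) (hi : Function.Bijective i) (c : ℝ)
    (T : (Fin n → ℝ) → ℕ → ℝ)
    (hT : ∀ p m, T p m = ∑ l ∈ Finset.univ.filter (fun l : Fin n => m ≤ l.val), p (i l))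
    (F : (Fin n → ℝ) → (Fin n → ℝ))
    (hF : ∀ p (j : Fin n), F p (i j) =
      if j.val = 0 then T p 0 else T p j.val / T p (j.val - 1))
    (p : Fin n → ℝ) (hp : ∀ j, 0 < p j) (hp1 : (∑ j, p j) < 1) :
    c * ((1 - ∑ j, p j) / ((1 - ∑ j, p j) + T p 0)) *
      ∏ a ∈ Finset.univ.filter (fun a : Fin n => a.val + 1 < n), (p (i a) / T p a.val)
    = c * ∏ j : Fin n, (1 - F p (i j)) := by
  have hT0 : T p 0 = ∑ j, p j := by
    rw [hT]
    rw [show (Finset.univ.filter fun l : Fin n => 0 ≤ l.val) = Finset.univ by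
      ext l; simp]
    exact hi.sum_comp p
  have hTsucc : ∀ m (hm : m < n), T p m = p (i ⟨m, hm⟩) + T p (m + 1) := by
    intro m hm
    rw [hT, hT, show (Finset.univ.filter fun l : Fin n => m ≤ l.val)
        = insert ⟨m, hm⟩ (Finset.univ.filter fun l : Fin n => m + 1 ≤ l.val) by
      ext l; simp [Fin.ext_iff]; omega]
    rw [Finset.sum_insert (by simp)]
  have hTpos : ∀ m, m < n → 0 < T p m := by
    intro m hm
    rw [hT]
    apply Finset.sum_pos (fun l _ => hp _)
    exact ⟨⟨m, hm⟩, by simp⟩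
  -- first factor simplifies
  have h1 : (1 - ∑ j, p j) / ((1 - ∑ j, p j) + T p 0) = 1 - ∑ j, p j := by
    rw [hT0, show (1 - ∑ j, p j) + ∑ j, p j = 1 by ring, div_one]
  rw [h1]
  -- split the RHS product at j = 0
  have h0mem : (⟨0, hn⟩ : Fin n) ∈ Finset.univ := Finset.mem_univ _
  rw [← Finset.mul_prod_erase Finset.univ (fun j => 1 - F p (i j)) h0mem]
  have hF0 : F p (i ⟨0, hn⟩) = T p 0 := by rw [hF]; simp
  rw [hF0, hT0]
  -- reindex the remaining product
  have hprod : ∏ a ∈ Finset.univ.filter (fun a : Fin n => a.val + 1 < n),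
      (p (i a) / T p a.val)
      = ∏ j ∈ Finset.univ.erase ⟨0, hn⟩, (1 - F p (i j)) := by
    apply Finset.prod_bij'
      (i := fun a (ha : a ∈ Finset.univ.filter fun a : Fin n => a.val + 1 < n) =>
        (⟨a.val + 1, (Finset.mem_filter.mp ha).2⟩ : Fin n))
      (j := fun j (hj : j ∈ Finset.univ.erase ⟨0, hn⟩) =>
        (⟨j.val - 1, lt_of_le_of_lt (Nat.sub_le _ _) j.isLt⟩ : Fin n))
    case left_inv => intro a ha; simp [Fin.ext_iff]
    case right_inv =>
      intro j hj
      have hj' : j.val ≠ 0 := fun h =>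
        (Finset.mem_erase.mp hj).1 (Fin.ext (by simpa using h))
      simp only [Fin.ext_iff, Fin.val_mk]
      omega
    case hi =>
      intro a ha
      simp only [Finset.mem_filter, Finset.mem_univ, true_and] at ha
      simp [Finset.mem_erase, Fin.ext_iff]
    case hj =>
      intro j hj
      have hj' : j.val ≠ 0 := fun h =>
        (Finset.mem_erase.mp hj).1 (Fin.ext (by simpa using h))
      have := j.isLt
      simp only [Finset.mem_filter, Finset.mem_univ, true_and, Fin.val_mk]
      omega
    case h =>
      intro a ha
      simp only [Finset.mem_filter, Finset.mem_univ, true_and] at ha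
      rw [hF]
      simp only [Nat.add_sub_cancel]
      rw [if_neg (by omega)]
      have hpos := hTpos a.val a.isLt
      have hs := hTsucc a.val a.isLt
      rw [Fin.eta] at hs
      field_simp
      linarith [hs]
  rw [hprod]
  ring
end
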